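/- arXiv:1406.6899 — 13 statements merged into one kernel-verified Lean document; each statement's English description precedes it below -/
import Mathlib

section
/- If G is a finite non-cyclic group all of whose proper subgroups are cyclic, and G is not a p-group, then G has a normal cyclic Sylow complement; more precisely, G is a semidirect product of a cyclic normal subgroup by a cyclic Sylow q-subgroup for some prime q. -/
/-! Let `p` be the smallest prime dividing `|G|`. A Sylow `p`-subgroup `P` is proper, hence cyclic,
and Burnside's transfer theorem then gives `P` a normal complement `N`: since `Aut P` has order
`p^(k-1)(p-1)` and `p` is minimal, `N_G(P) = C_G(P)`. As `P ≠ 1`, `N` is proper, hence cyclic too. -/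

section

variable {G : Type*} [Group G]

theorem nontrivial_of_not_isPGroup {p : ℕ} (h : ¬ IsPGroup p G) : Nontrivial G :=
  not_subsingleton_iff_nontrivial.mp fun _ => h (.of_subsingleton p G)

theorem Sylow.coe_ne_top_of_not_isPGroup {p : ℕ} (P : Sylow p G) (h : ¬ IsPGroup p G) :
    (P : Subgroup G) ≠ ⊤ := fun hP =>
  h ((hP ▸ P.isPGroup').of_equiv Subgroup.topEquiv)

theorem Subgroup.IsComplement'.ne_top_of_ne_bot {N H : Subgroup G} (hc : N.IsComplement' H)
    (hH : H ≠ ⊥) : N ≠ ⊤ := by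
  rintro rfl
  exact hH (Subgroup.isComplement'_top_left.mp hc)

end

theorem noncyclic_nonpgroup_all_proper_cyclic_general (G : Type*) [Group G] [Finite G]
    (h2 : ¬ ∃ p : ℕ, p.Prime ∧ IsPGroup p G)
    (h3 : ∀ H : Subgroup G, H ≠ ⊤ → IsCyclic H) :
    ∃ (q : ℕ) (_ : Fact q.Prime) (N : Subgroup G) (S : Sylow q G),
      N.Normal ∧ IsCyclic N ∧ IsCyclic (S : Subgroup G) ∧
      N ⊓ (S : Subgroup G) = ⊥ ∧ N ⊔ (S : Subgroup G) = ⊤ := by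
  have not_pGroup (p : ℕ) [hp : Fact p.Prime] : ¬ IsPGroup p G := fun hG => h2 ⟨p, hp.out, hG⟩
  have : Nontrivial G := nontrivial_of_not_isPGroup (not_pGroup 2)
  let p := (Nat.card G).minFac
  have : Fact p.Prime := ⟨Nat.minFac_prime Finite.one_lt_card.ne'⟩
  let P : Sylow p G := default
  have hP : IsCyclic P := h3 P (P.coe_ne_top_of_not_isPGroup (not_pGroup p))
  have hcompl := hP.isComplement' rfl
  have hcomplP : (MonoidHom.transferSylow P _).ker ≠ ⊤ :=
    hcompl.ne_top_of_ne_bot (P.ne_bot_of_dvd_card (Nat.card G).minFac_dvd)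
  exact ⟨p, inferInstance, _, P, MonoidHom.normal_ker _, h3 _ hcomplP, hP, hcompl.disjoint.eq_bot,
    hcompl.sup_eq_top⟩

theorem noncyclic_nonpgroup_all_proper_cyclic (G : Type*) [Group G] [Finite G]
    (h1 : ¬ IsCyclic G)
    (h2 : ¬ ∃ p : ℕ, p.Prime ∧ IsPGroup p G)
    (h3 : ∀ H : Subgroup G, H ≠ ⊤ → IsCyclic H) :
    ∃ (q : ℕ) (_ : Fact q.Prime) (N : Subgroup G) (S : Sylow q G),
      N.Normal ∧ IsCyclic N ∧ IsCyclic (S : Subgroup G) ∧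
      N ⊓ (S : Subgroup G) = ⊥ ∧ N ⊔ (S : Subgroup G) = ⊤ :=
  noncyclic_nonpgroup_all_proper_cyclic_general G h2 h3
end

section
/- If G_1, ..., G_k are finite groups of pairwise coprime orders, then cdeg(G_1 × ⋯ × G_k) = ∏_{i=1}^k cdeg(G_i). -/
/-!
For pairwise coprime orders, a subgroup `H ≤ ∏ Gᵢ` is the product of its projections `πᵢ H`:
for `y ∈ H`, the power `y ^ n` with `n = ∏_{j ≠ i} |Gⱼ|` kills every coordinate except the
`i`-th, where raising to the `n`-th power is invertible, so `Pi.mulSingle i (y i) ∈ H`.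
Hence `H ↦ (πᵢ H)ᵢ` is a bijection onto families of subgroups, and `H` is cyclic iff every
`πᵢ H` is: if `πᵢ H = ⟨gᵢ⟩`, the same decomposition applied to `⟨(gᵢ)ᵢ⟩` shows it equals `H`.
Both the number of subgroups and the number of cyclic subgroups are therefore multiplicative.
-/

noncomputable def cdeg (G : Type*) [Group G] : ℚ :=
  (Nat.card {H : Subgroup G // IsCyclic H} : ℚ) / (Nat.card (Subgroup G) : ℚ)

open Set

namespace Subgroup

variable {ι : Type*} {G : ι → Type*} [∀ i, Group (G i)]

theorem map_evalMonoidHom_pi (K : ∀ i, Subgroup (G i)) (i : ι) :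
    (pi univ K).map (Pi.evalMonoidHom G i) = K i := by
  classical
  refine le_antisymm ?_ fun k hk => ⟨Pi.mulSingle i k, ?_, Pi.mulSingle_eq_same i k⟩
  · rintro _ ⟨y, hy, rfl⟩
    exact hy i (mem_univ i)
  · exact (mulSingle_mem_pi i k).mpr fun _ => hk

variable [Fintype ι]
  (hG : Pairwise fun i j => (Nat.card (G i)).Coprime (Nat.card (G j)))
include hG

theorem mulSingle_apply_mem_of_coprime [DecidableEq ι] {H : Subgroup (∀ i, G i)}
    {y : ∀ i, G i} (hy : y ∈ H) (i : ι) : Pi.mulSingle i (y i) ∈ H := by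
  set n := ∏ j ∈ Finset.univ.erase i, Nat.card (G j)
  have hpow : y ^ n = Pi.mulSingle i (y i ^ n) := by
    funext j
    by_cases hji : j = i
    · subst hji
      simp
    · have hdvd : orderOf (y j) ∣ n := (_root_.orderOf_dvd_natCard (y j)).trans
        (Finset.dvd_prod_of_mem _ (Finset.mem_erase.mpr ⟨hji, Finset.mem_univ j⟩))
      rw [Pi.pow_apply, orderOf_dvd_iff_pow_eq_one.mp hdvd, Pi.mulSingle_eq_of_ne hji]
  have hcop : n.Coprime (orderOf (y i)) :=
    Nat.Coprime.coprime_dvd_right (_root_.orderOf_dvd_natCard (y i))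
      (Nat.Coprime.prod_left fun j hj => hG (Finset.ne_of_mem_erase hj))
  have hgen : y i ∈ zpowers (y i ^ n) := mem_zpowers_pow_iff.mpr hcop
  have : Pi.mulSingle i (y i) ∈ zpowers (y ^ n) := by
    rw [hpow, ← MonoidHom.mulSingle_apply, ← MonoidHom.map_zpowers]
    exact mem_map_of_mem _ hgen
  exact zpowers_le.mpr (pow_mem hy n) this

theorem pi_map_evalMonoidHom_of_coprime (H : Subgroup (∀ i, G i)) :
    pi univ (fun i => H.map (Pi.evalMonoidHom G i)) = H := by
  classical
  refine le_antisymm (fun x hx => pi_mem_of_mulSingle_mem x fun i => ?_)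
    fun x hx i _ => mem_map_of_mem _ hx
  obtain ⟨y, hy, hyx⟩ := hx i (mem_univ i)
  rw [← hyx]
  exact mulSingle_apply_mem_of_coprime hG hy i

noncomputable def piEquivOfCoprime : Subgroup (∀ i, G i) ≃ ∀ i, Subgroup (G i) where
  toFun H i := H.map (Pi.evalMonoidHom G i)
  invFun K := pi univ K
  left_inv := pi_map_evalMonoidHom_of_coprime hG
  right_inv K := funext (map_evalMonoidHom_pi K)

theorem isCyclic_iff_forall_isCyclic_map_evalMonoidHom_of_coprime (H : Subgroup (∀ i, G i)) :
    IsCyclic H ↔ ∀ i, IsCyclic (H.map (Pi.evalMonoidHom G i)) := by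
  refine ⟨fun _ i => isCyclic_of_surjective _ ((Pi.evalMonoidHom G i).subgroupMap_surjective H),
    fun hH => ?_⟩
  choose g hg using fun i => (Subgroup.isCyclic_iff_exists_zpowers_eq_top _).mp (hH i)
  refine (Subgroup.isCyclic_iff_exists_zpowers_eq_top _).mpr ⟨g, ?_⟩
  calc zpowers g
      = pi univ (fun i => (zpowers g).map (Pi.evalMonoidHom G i)) :=
        (pi_map_evalMonoidHom_of_coprime hG _).symm
    _ = pi univ (fun i => H.map (Pi.evalMonoidHom G i)) := by
        simp only [MonoidHom.map_zpowers, Pi.evalMonoidHom_apply, hg]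
    _ = H := pi_map_evalMonoidHom_of_coprime hG H

theorem card_pi_of_coprime :
    Nat.card (Subgroup (∀ i, G i)) = ∏ i, Nat.card (Subgroup (G i)) := by
  rw [Nat.card_congr (piEquivOfCoprime hG), Nat.card_pi]

theorem card_isCyclic_pi_of_coprime :
    Nat.card {H : Subgroup (∀ i, G i) // IsCyclic H}
      = ∏ i, Nat.card {K : Subgroup (G i) // IsCyclic K} := by
  let e := ((piEquivOfCoprime hG).subtypeEquiv
      (isCyclic_iff_forall_isCyclic_map_evalMonoidHom_of_coprime hG)).trans
    (Equiv.subtypePiEquivPi (p := fun i (K : Subgroup (G i)) => IsCyclic K))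
  rw [Nat.card_congr e, Nat.card_pi]

end Subgroup

theorem cdeg_pi_of_coprime_general {ι : Type*} [Fintype ι] (G : ι → Type*)
    [∀ i, Group (G i)]
    (h : ∀ i j, i ≠ j → Nat.Coprime (Nat.card (G i)) (Nat.card (G j))) :
    cdeg (∀ i, G i) = ∏ i, cdeg (G i) := by
  have hG : Pairwise fun i j => (Nat.card (G i)).Coprime (Nat.card (G j)) := fun i j => h i j
  unfold cdeg
  rw [Subgroup.card_isCyclic_pi_of_coprime hG, Subgroup.card_pi_of_coprime hG,
    Nat.cast_prod, Nat.cast_prod, Finset.prod_div_distrib]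

theorem cdeg_pi_of_coprime {ι : Type*} [Fintype ι] (G : ι → Type*)
    [∀ i, Group (G i)] [∀ i, Finite (G i)]
    (h : ∀ i j, i ≠ j → Nat.Coprime (Nat.card (G i)) (Nat.card (G j))) :
    cdeg (∀ i, G i) = ∏ i, cdeg (G i) :=
  cdeg_pi_of_coprime_general G h
end

section
/- For every prime p, cdeg((Z_p)^3) = 1/2. -/
/-!
Over `ZMod p` an additive subgroup is the same thing as a subspace, and it is cyclic exactly
when the subspace has dimension at most one. Choosing an isomorphism `V ≃ Dual V`, the
annihilator sends `W` to a subspace of dimension `n - dim W`; in dimension `n = 3` it therefore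
exchanges the cyclic subgroups with the non-cyclic ones, which thus make up half of all subgroups.
-/

noncomputable def acdeg (G : Type*) [AddGroup G] : ℚ :=
  (Nat.card {H : AddSubgroup G // IsAddCyclic H} : ℚ) / (Nat.card (AddSubgroup G) : ℚ)

open Module Submodule

namespace AddSubgroup

variable {M : Type*} [AddCommGroup M]

theorem toZModSubmodule_zmultiples {n : ℕ} [Module (ZMod n) M] (g : M) :
    toZModSubmodule n (zmultiples g) = span (ZMod n) {g} := by
  ext x
  simp only [mem_toZModSubmodule, mem_zmultiples_iff, mem_span_singleton]
  constructor
  · rintro ⟨k, rfl⟩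
    exact ⟨k, Int.cast_smul_eq_zsmul _ _ _⟩
  · rintro ⟨a, rfl⟩
    obtain ⟨k, rfl⟩ := ZMod.intCast_surjective a
    exact ⟨k, (Int.cast_smul_eq_zsmul _ _ _).symm⟩

theorem isAddCyclic_iff_isPrincipal_toZModSubmodule {n : ℕ} [Module (ZMod n) M]
    (H : AddSubgroup M) : IsAddCyclic H ↔ (toZModSubmodule n H).IsPrincipal := by
  rw [H.isAddCyclic_iff_exists_zmultiples_eq_top, isPrincipal_iff]
  refine exists_congr fun g => ?_
  rw [← toZModSubmodule_zmultiples, eq_comm, (toZModSubmodule n).injective.eq_iff]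

theorem isAddCyclic_iff_finrank_toZModSubmodule_le_one {p : ℕ} [Fact p.Prime]
    [Module (ZMod p) M] [Module.Finite (ZMod p) M] (H : AddSubgroup M) :
    IsAddCyclic H ↔ finrank (ZMod p) (toZModSubmodule p H) ≤ 1 := by
  rw [isAddCyclic_iff_isPrincipal_toZModSubmodule (n := p), finrank_le_one_iff_isPrincipal]

end AddSubgroup

namespace Subspace

variable {K V : Type*} [Field K] [AddCommGroup V] [Module K V] [FiniteDimensional K V]

theorem card_finrank_le_eq_card_le_finrank_add (k : ℕ) :
    Nat.card {W : Subspace K V // finrank K W ≤ k} =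
      Nat.card {W : Subspace K V // finrank K V ≤ finrank K W + k} := by
  let e : V ≃ₗ[K] Dual K V := (finBasis K V).toDualEquiv
  let annihilatorEquiv : Subspace K V ≃ Subspace K V :=
    (orderIsoFiniteDimensional.toEquiv.trans OrderDual.ofDual).trans
      (orderIsoMapComap e.symm).toEquiv
  refine Nat.card_congr (annihilatorEquiv.subtypeEquiv fun W => ?_)
  have h_map : finrank K (annihilatorEquiv W) = finrank K W.dualAnnihilator :=
    LinearEquiv.finrank_map_eq _ _
  have h_dual := W.finrank_add_finrank_dualAnnihilator_eq
  omega

theorem card_finrank_le_eq_card_not_finrank_le {k : ℕ} (hV : finrank K V = 2 * k + 1) :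
    Nat.card {W : Subspace K V // finrank K W ≤ k} =
      Nat.card {W : Subspace K V // ¬ finrank K W ≤ k} := by
  rw [card_finrank_le_eq_card_le_finrank_add, hV]
  congr! 3
  omega

end Subspace

theorem acdeg_eq_one_half_of_finrank_eq_three {p : ℕ} [Fact p.Prime] {V : Type*}
    [AddCommGroup V] [Module (ZMod p) V] [Finite V] (hV : finrank (ZMod p) V = 3) :
    acdeg V = 1 / 2 := by
  have : Module.Finite (ZMod p) V := Module.Finite.of_finite
  let e := (AddSubgroup.toZModSubmodule (M := V) p).toEquiv
  have h_cyclic : Nat.card {H : AddSubgroup V // IsAddCyclic H} =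
      Nat.card {W : Subspace (ZMod p) V // finrank (ZMod p) W ≤ 1} :=
    Nat.card_congr (e.subtypeEquiv AddSubgroup.isAddCyclic_iff_finrank_toZModSubmodule_le_one)
  have h_half := Subspace.card_finrank_le_eq_card_not_finrank_le (K := ZMod p) (k := 1) hV
  have h_total : Nat.card (AddSubgroup V) =
      2 * Nat.card {W : Subspace (ZMod p) V // finrank (ZMod p) W ≤ 1} := by
    rw [Nat.card_congr e,
      ← Nat.card_congr (Equiv.sumCompl fun W : Subspace (ZMod p) V => finrank (ZMod p) W ≤ 1),
      Nat.card_sum, ← h_half, two_mul]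
  have : Nonempty {W : Subspace (ZMod p) V // finrank (ZMod p) W ≤ 1} := ⟨⟨⊥, by simp⟩⟩
  have h_pos : 0 < Nat.card {W : Subspace (ZMod p) V // finrank (ZMod p) W ≤ 1} := Nat.card_pos
  rw [acdeg, h_cyclic, h_total]
  push_cast
  field_simp

theorem cdeg_elementary_abelian_rank_three (p : ℕ) (hp : p.Prime) :
    acdeg (Fin 3 → ZMod p) = 1 / 2 := by
  have : Fact p.Prime := ⟨hp⟩
  exact acdeg_eq_one_half_of_finrank_eq_three (finrank_fin_fun _)
end

section
/- For every prime p, cdeg((Z_p)^4) = (p^3+p^2+p+2)/(p^4+3p^3+4p^2+3p+5), and consequently cdeg((Z_p)^4) tends to 0 as p → ∞. -/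
/-!
The subgroups of an elementary abelian `p`-group are the `𝔽_p`-subspaces, and a subgroup is
cyclic iff it has dimension at most one. Counting linearly independent `k`-tuples of `𝔽_q^n`
through their span, whose fibres are the ordered bases of a `k`-dimensional space, shows that
`𝔽_q^n` has `∏ (q^n - q^i) / ∏ (q^k - q^i)` subspaces of dimension `k`; for `n = 4` these
numbers are `1, q^3 + q^2 + q + 1, (q^2 + 1)(q^2 + q + 1), q^3 + q^2 + q + 1, 1`.
-/

open Module

theorem card_submodule_finrank_le_eq_sum {R M : Type*} [Semiring R] [AddCommMonoid M]
    [Module R M] [Finite M] (m : ℕ) :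
    Nat.card {W : Submodule R M // finrank R W ≤ m} =
      ∑ k ∈ Finset.range (m + 1), Nat.card {W : Submodule R M // finrank R W = k} := by
  classical
  have := Fintype.ofFinite (Submodule R M)
  simp only [Nat.card_eq_fintype_card, Fintype.card_subtype]
  rw [Finset.card_eq_sum_card_fiberwise (f := fun W : Submodule R M => finrank R W)
    (t := Finset.range (m + 1)) fun W hW => by simpa [Nat.lt_succ_iff] using hW]
  refine Finset.sum_congr rfl fun k hk => ?_
  rw [Finset.filter_filter]
  refine congrArg _ (Finset.filter_congr fun W _ => ?_)
  simp only [Finset.mem_range] at hk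
  omega

section FiniteField

variable {K V : Type*} [DivisionRing K] [Fintype K] [AddCommGroup V] [Module K V] [Finite V]

local notation "q" => Fintype.card K

theorem card_linearIndependent_span_eq {k : ℕ} (W : Submodule K V) (hW : finrank K W = k) :
    Nat.card {s : {s : Fin k → V // LinearIndependent K s} //
        Submodule.span K (Set.range s.1) = W} = ∏ i : Fin k, (q ^ k - q ^ (i : ℕ)) := by
  rw [← hW, ← card_linearIndependent le_rfl]
  refine Nat.card_congr
    { toFun := fun s => ⟨fun i => ⟨s.1.1 i, s.2.le (Submodule.subset_span ⟨i, rfl⟩)⟩,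
        .of_comp W.subtype s.1.2⟩
      invFun := fun s => ⟨⟨W.subtype ∘ s.1, s.2.map' W.subtype W.ker_subtype⟩, ?_⟩
      left_inv := fun _ => rfl
      right_inv := fun _ => rfl }
  have hspan : Submodule.span K (Set.range s.1) = ⊤ :=
    Submodule.eq_top_of_finrank_eq (by rw [finrank_span_eq_card s.2, Fintype.card_fin])
  rw [Set.range_comp, ← Submodule.map_span, hspan, Submodule.map_top, Submodule.range_subtype]

theorem card_submodule_finrank_eq_mul {k : ℕ} (hk : k ≤ finrank K V) :
    Nat.card {W : Submodule K V // finrank K W = k} * ∏ i : Fin k, (q ^ k - q ^ (i : ℕ)) =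
      ∏ i : Fin k, (q ^ finrank K V - q ^ (i : ℕ)) := by
  have := Fintype.ofFinite {W : Submodule K V // finrank K W = k}
  let span :
      {s : Fin k → V // LinearIndependent K s} → {W : Submodule K V // finrank K W = k} :=
    fun s => ⟨Submodule.span K (Set.range s.1), by
      rw [finrank_span_eq_card s.2, Fintype.card_fin]⟩
  have hfibre (W : {W : Submodule K V // finrank K W = k}) :
      Nat.card {s // span s = W} = ∏ i : Fin k, (q ^ k - q ^ (i : ℕ)) := by
    rw [← card_linearIndependent_span_eq W.1 W.2]
    exact Nat.card_congr (Equiv.subtypeEquivRight fun _ => Subtype.ext_iff)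
  rw [← card_linearIndependent hk, ← Nat.card_congr (Equiv.sigmaFiberEquiv span),
    Nat.card_sigma, Finset.sum_congr rfl fun W _ => hfibre W, Finset.sum_const, smul_eq_mul,
    Finset.card_univ, Nat.card_eq_fintype_card]

theorem cast_card_submodule_finrank_eq {n k : ℕ} (hn : finrank K V = n) (hk : k ≤ n) {x : ℚ}
    (hx : x * ∏ i ∈ Finset.range k, ((q : ℚ) ^ k - (q : ℚ) ^ i) =
      ∏ i ∈ Finset.range k, ((q : ℚ) ^ n - (q : ℚ) ^ i)) :
    (Nat.card {W : Submodule K V // finrank K W = k} : ℚ) = x := by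
  subst hn
  have hq : 1 < (q : ℚ) := by exact_mod_cast Fintype.one_lt_card
  have hcast {m : ℕ} (hm : k ≤ m) : ((∏ i : Fin k, (q ^ m - q ^ (i : ℕ)) : ℕ) : ℚ) =
      ∏ i ∈ Finset.range k, ((q : ℚ) ^ m - (q : ℚ) ^ i) := by
    rw [Nat.cast_prod, Fin.prod_univ_eq_prod_range (fun i => ((q ^ m - q ^ i : ℕ) : ℚ))]
    refine Finset.prod_congr rfl fun i hi => ?_
    have hi : i ≤ m := (Finset.mem_range.1 hi).le.trans hm
    rw [Nat.cast_sub (Nat.pow_le_pow_right Fintype.card_pos hi)]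
    norm_cast
  have hne : ∏ i ∈ Finset.range k, ((q : ℚ) ^ k - (q : ℚ) ^ i) ≠ 0 :=
    Finset.prod_ne_zero_iff.2 fun i hi =>
      sub_ne_zero.2 (pow_lt_pow_right₀ hq (Finset.mem_range.1 hi)).ne'
  refine mul_right_cancel₀ hne ?_
  rw [hx, ← hcast le_rfl, ← hcast hk, ← Nat.cast_mul, card_submodule_finrank_eq_mul hk]

theorem cast_card_submodule_finrank_le_one_of_finrank_eq_four (h : finrank K V = 4) :
    (Nat.card {W : Submodule K V // finrank K W ≤ 1} : ℚ) =
      (q : ℚ) ^ 3 + (q : ℚ) ^ 2 + q + 2 := by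
  rw [card_submodule_finrank_le_eq_sum, Nat.cast_sum, Finset.sum_range_succ, Finset.sum_range_one,
    cast_card_submodule_finrank_eq h (k := 0) (by norm_num) (x := 1) (by simp),
    cast_card_submodule_finrank_eq h (k := 1) (by norm_num)
      (x := (q : ℚ) ^ 3 + (q : ℚ) ^ 2 + q + 1)
      (by simp only [Finset.prod_range_succ, Finset.prod_range_zero]; ring)]
  ring

theorem cast_card_submodule_of_finrank_eq_four (h : finrank K V = 4) :
    (Nat.card (Submodule K V) : ℚ) =
      (q : ℚ) ^ 4 + 3 * (q : ℚ) ^ 3 + 4 * (q : ℚ) ^ 2 + 3 * q + 5 := by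
  rw [← Nat.card_congr (Equiv.subtypeUnivEquiv fun W : Submodule K V => h ▸ W.finrank_le),
    card_submodule_finrank_le_eq_sum, Finset.sum_range_succ, Finset.sum_range_succ,
    Finset.sum_range_succ, ← card_submodule_finrank_le_eq_sum]
  push_cast
  rw [cast_card_submodule_finrank_le_one_of_finrank_eq_four h,
    cast_card_submodule_finrank_eq h (k := 2) (by norm_num)
      (x := (q : ℚ) ^ 4 + (q : ℚ) ^ 3 + 2 * (q : ℚ) ^ 2 + q + 1)
      (by simp only [Finset.prod_range_succ, Finset.prod_range_zero]; ring),
    cast_card_submodule_finrank_eq h (k := 3) (by norm_num)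
      (x := (q : ℚ) ^ 3 + (q : ℚ) ^ 2 + q + 1)
      (by simp only [Finset.prod_range_succ, Finset.prod_range_zero]; ring),
    cast_card_submodule_finrank_eq h (k := 4) le_rfl (x := 1) (by simp)]
  ring

end FiniteField

theorem isAddCyclic_iff_finrank_le_one {p : ℕ} [Fact p.Prime] {V : Type*} [AddCommGroup V]
    [Module (ZMod p) V] [Finite V] : IsAddCyclic V ↔ finrank (ZMod p) V ≤ 1 := by
  rw [finrank_le_one_iff]
  constructor
  · rintro ⟨g, hg⟩
    refine ⟨g, fun w => ?_⟩
    obtain ⟨n, rfl⟩ := hg w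
    exact ⟨n, Int.cast_smul_eq_zsmul (ZMod p) n g⟩
  · rintro ⟨v, hv⟩
    refine ⟨v, fun w => ?_⟩
    obtain ⟨c, rfl⟩ := hv w
    obtain ⟨n, rfl⟩ := ZMod.intCast_surjective c
    exact ⟨n, (Int.cast_smul_eq_zsmul (ZMod p) n v).symm⟩

theorem card_isAddCyclic_addSubgroup_eq (p : ℕ) [Fact p.Prime] {V : Type*} [AddCommGroup V]
    [Module (ZMod p) V] [Finite V] :
    Nat.card {H : AddSubgroup V // IsAddCyclic H} =
      Nat.card {W : Submodule (ZMod p) V // finrank (ZMod p) W ≤ 1} :=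
  Nat.card_congr <| (AddSubgroup.toZModSubmodule p).toEquiv.subtypeEquiv
    fun _ => isAddCyclic_iff_finrank_le_one

theorem tendsto_cubic_div_quartic_atTop :
    Filter.Tendsto (fun n : ℕ => ((n : ℚ) ^ 3 + (n : ℚ) ^ 2 + n + 2) /
      ((n : ℚ) ^ 4 + 3 * (n : ℚ) ^ 3 + 4 * (n : ℚ) ^ 2 + 3 * n + 5))
      Filter.atTop (nhds 0) := by
  refine tendsto_of_tendsto_of_tendsto_of_le_of_le' tendsto_const_nhds
    (tendsto_const_div_atTop_nhds_zero_nat 5) (.of_forall fun n => by positivity) ?_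
  filter_upwards [Filter.eventually_ge_atTop 1] with n hn
  replace hn : (1 : ℚ) ≤ n := by exact_mod_cast hn
  rw [div_le_div_iff₀ (by positivity) (by positivity)]
  nlinarith [pow_le_pow_left₀ zero_le_one hn 2, pow_le_pow_left₀ zero_le_one hn 3]

theorem acdeg_of_finrank_eq_four {p : ℕ} [Fact p.Prime] {V : Type*} [AddCommGroup V]
    [Module (ZMod p) V] [Finite V] (h : finrank (ZMod p) V = 4) :
    acdeg V = ((p : ℚ) ^ 3 + (p : ℚ) ^ 2 + p + 2) /
      ((p : ℚ) ^ 4 + 3 * (p : ℚ) ^ 3 + 4 * (p : ℚ) ^ 2 + 3 * p + 5) := by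
  rw [acdeg, card_isAddCyclic_addSubgroup_eq p,
    Nat.card_congr (AddSubgroup.toZModSubmodule p).toEquiv,
    cast_card_submodule_finrank_le_one_of_finrank_eq_four h,
    cast_card_submodule_of_finrank_eq_four h, ZMod.card]

theorem cdeg_elementary_abelian_rank_four :
    (∀ p : ℕ, p.Prime → acdeg (Fin 4 → ZMod p) =
      ((p : ℚ) ^ 3 + (p : ℚ) ^ 2 + (p : ℚ) + 2) /
        ((p : ℚ) ^ 4 + 3 * (p : ℚ) ^ 3 + 4 * (p : ℚ) ^ 2 + 3 * (p : ℚ) + 5)) ∧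
    Filter.Tendsto (fun p : ℕ => acdeg (Fin 4 → ZMod p))
      (Filter.atTop ⊓ Filter.principal {p | p.Prime}) (nhds 0) := by
  have hformula : ∀ p : ℕ, p.Prime → acdeg (Fin 4 → ZMod p) =
      ((p : ℚ) ^ 3 + (p : ℚ) ^ 2 + (p : ℚ) + 2) /
        ((p : ℚ) ^ 4 + 3 * (p : ℚ) ^ 3 + 4 * (p : ℚ) ^ 2 + 3 * (p : ℚ) + 5) := fun p hp =>
    have := Fact.mk hp
    acdeg_of_finrank_eq_four (by simp)
  refine ⟨hformula, (tendsto_cubic_div_quartic_atTop.mono_left inf_le_left).congr' ?_⟩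
  filter_upwards [Filter.mem_inf_of_right (Filter.mem_principal_self _)] with p hp
  exact (hformula p hp).symm
end

section
/- The infimum of cdeg(G) over all finite groups G equals 0. -/
/-!
A cyclic subgroup is `zpowers g` for some element `g`, so a finite group `G` has at most `|G|`
cyclic subgroups. On the other hand the graphs of the homomorphisms `A →* B` are pairwise distinct
subgroups of `A × B`. For `A = B = (ℤ/2)ⁿ` this gives `cdeg (A × B) ≤ 4ⁿ / 2^(n²)`, which tends
to `0`.
-/

open Filter Topology

theorem Subgroup.card_isCyclic_le_card (G : Type*) [Group G] [Finite G] :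
    Nat.card {H : Subgroup G // IsCyclic H} ≤ Nat.card G := by
  refine Nat.card_le_card_of_surjective (fun g ↦ ⟨Subgroup.zpowers g, inferInstance⟩) ?_
  rintro ⟨H, hH⟩
  obtain ⟨g, hg⟩ := H.isCyclic_iff_exists_zpowers_eq_top.mp hH
  exact ⟨g, Subtype.ext hg⟩

theorem MonoidHom.card_le_card_subgroup_prod (G H : Type*) [Group G] [Group H] [Finite G]
    [Finite H] : Nat.card (G →* H) ≤ Nat.card (Subgroup (G × H)) := by
  refine Nat.card_le_card_of_injective MonoidHom.graph fun f g hfg ↦ MonoidHom.ext fun x ↦ ?_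
  have hx : (x, f x) ∈ g.graph := hfg ▸ MonoidHom.mem_graph.mpr rfl
  exact (MonoidHom.mem_graph.mp hx).symm

theorem cdeg_nonneg (G : Type*) [Group G] : 0 ≤ cdeg G := by
  unfold cdeg; positivity

theorem cdeg_prod_le_card_div_card_monoidHom (G H : Type*) [Group G] [Group H] [Finite G]
    [Finite H] : cdeg (G × H) ≤ Nat.card (G × H) / Nat.card (G →* H) := by
  have hcyc : (Nat.card {K : Subgroup (G × H) // IsCyclic K} : ℚ) ≤ Nat.card (G × H) := by
    exact_mod_cast Subgroup.card_isCyclic_le_card (G × H)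
  have hsub : (Nat.card (G →* H) : ℚ) ≤ Nat.card (Subgroup (G × H)) := by
    exact_mod_cast MonoidHom.card_le_card_subgroup_prod G H
  have : Finite (G →* H) := .of_injective _ DFunLike.coe_injective
  have hpos : (0 : ℚ) < Nat.card (G →* H) := by
    exact_mod_cast Nat.card_pos (α := G →* H)
  exact div_le_div₀ (by positivity) hcyc hpos hsub

abbrev ElementaryAbelianTwo (n : ℕ) : Type := Multiplicative (Fin n → ZMod 2)

theorem card_monoidHom_elementaryAbelianTwo (n : ℕ) :
    Nat.card (ElementaryAbelianTwo n →* ElementaryAbelianTwo n) = 2 ^ (n * n) := by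
  rw [← Nat.card_congr AddMonoidHom.toMultiplicative,
    Nat.card_congr (AddMonoidHom.toZModLinearMapEquiv 2).toEquiv,
    Nat.card_congr LinearMap.toMatrix'.toEquiv]
  simp [Nat.card_eq_fintype_card, Matrix, ← pow_mul]

theorem cdeg_elementaryAbelianTwo_prod_le (k : ℕ) :
    cdeg (ElementaryAbelianTwo (k + 2) × ElementaryAbelianTwo (k + 2)) ≤ (1 / 2) ^ k := by
  set n := k + 2 with hn
  have hcard : Nat.card (ElementaryAbelianTwo n × ElementaryAbelianTwo n) = 2 ^ n * 2 ^ n := by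
    simp [Nat.card_eq_fintype_card]
  have hexp : n + n + k ≤ n * n := by nlinarith [hn]
  calc cdeg (ElementaryAbelianTwo n × ElementaryAbelianTwo n)
      ≤ (2 : ℚ) ^ n * 2 ^ n / 2 ^ (n * n) := by
        simpa [hcard, card_monoidHom_elementaryAbelianTwo] using
          cdeg_prod_le_card_div_card_monoidHom (ElementaryAbelianTwo n) (ElementaryAbelianTwo n)
    _ ≤ (1 / 2) ^ k := by
        rw [div_le_iff₀ (by positivity), one_div_pow, div_mul_eq_mul_div, one_mul,
          le_div_iff₀ (by positivity), ← pow_add, ← pow_add]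
        exact pow_le_pow_right₀ (by norm_num) hexp

theorem tendsto_cdeg_elementaryAbelianTwo_prod :
    Tendsto (fun k ↦ cdeg (ElementaryAbelianTwo (k + 2) × ElementaryAbelianTwo (k + 2))) atTop
      (𝓝 0) :=
  tendsto_of_tendsto_of_tendsto_of_le_of_le tendsto_const_nhds
    (tendsto_pow_atTop_nhds_zero_of_lt_one (r := (1 / 2 : ℚ)) (by norm_num) (by norm_num))
    (fun _ ↦ cdeg_nonneg _) cdeg_elementaryAbelianTwo_prod_le

theorem cdeg_inf_eq_zero :
    IsGLB {x : ℚ | ∃ (G : Type) (inst : Group G), Finite G ∧ @cdeg G inst = x} 0 := by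
  refine isGLB_of_mem_closure ?_ <| mem_closure_of_tendsto tendsto_cdeg_elementaryAbelianTwo_prod
    (Eventually.of_forall fun _ ↦ ⟨_, _, inferInstance, rfl⟩)
  rintro x ⟨G, inst, -, rfl⟩
  exact cdeg_nonneg G
end

section
/- For all positive integers m and n, the number of cyclic subgroups of Z_m × Z_n equals ∑_{a | m} ∑_{b | n} φ(gcd(a,b)). -/
/-!
Weighting every element `x` by `1 / φ (ord x)` counts each cyclic subgroup exactly once, since
`⟨x⟩` has `φ (ord x)` generators. In `ℤ/m × ℤ/n` the order of `(x, y)` is `lcm (ord x) (ord y)`,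
and `ℤ/m` has `φ a` elements of order `a` for each `a ∣ m`, so the count is
`∑_{a ∣ m} ∑_{b ∣ n} φ a φ b / φ (lcm a b)`, which is the claimed sum because
`φ (gcd a b) φ (lcm a b) = φ a φ b`.
-/

open Finset AddSubgroup
open scoped Nat

theorem Nat.totient_gcd_mul_totient_lcm (a b : ℕ) : φ (a.gcd b) * φ (a.lcm b) = φ a * φ b := by
  rcases Nat.eq_zero_or_pos (a.gcd b) with hg | hg
  · obtain ⟨rfl, rfl⟩ := Nat.gcd_eq_zero_iff.mp hg
    simp
  have h := Nat.totient_gcd_mul_totient_mul (a.gcd b) (a.lcm b)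
  rw [Nat.gcd_eq_left ((Nat.gcd_dvd_left a b).trans (Nat.dvd_lcm_left a b)), Nat.gcd_mul_lcm,
    Nat.totient_gcd_mul_totient_mul a b] at h
  exact (Nat.eq_of_mul_eq_mul_right hg h).symm

theorem Nat.totient_mul_totient_div_totient_lcm {a b : ℕ} (ha : a ≠ 0) (hb : b ≠ 0) :
    (φ a * φ b / φ (a.lcm b) : ℚ) = φ (a.gcd b) := by
  have hl : (φ (a.lcm b) : ℚ) ≠ 0 := by simp [Nat.lcm_ne_zero ha hb]
  rw [div_eq_iff hl]
  exact_mod_cast (Nat.totient_gcd_mul_totient_lcm a b).symm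

section

variable {G : Type*} [AddGroup G]

theorem AddSubgroup.zmultiples_eq_zmultiples_iff_mem_and_addOrderOf_eq [Finite G] {x y : G} :
    zmultiples y = zmultiples x ↔ y ∈ zmultiples x ∧ addOrderOf y = addOrderOf x := by
  refine ⟨fun h => ⟨h ▸ mem_zmultiples y, ?_⟩, fun ⟨hy, hord⟩ => ?_⟩
  · rw [← Nat.card_zmultiples y, ← Nat.card_zmultiples x, h]
  · refine eq_of_le_of_card_ge (zmultiples_le.mpr hy) ?_
    rw [Nat.card_zmultiples, Nat.card_zmultiples, hord]

variable [Fintype G]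

open scoped Classical in
theorem card_filter_zmultiples_eq_zmultiples (x : G) :
    #{y | zmultiples y = zmultiples x} = φ (addOrderOf x) := by
  have hcard : Fintype.card (zmultiples x) = addOrderOf x := by
    rw [← Nat.card_eq_fintype_card, Nat.card_zmultiples]
  rw [← IsAddCyclic.card_addOrderOf_eq_totient (α := zmultiples x) hcard.symm.dvd,
    ← card_map (Function.Embedding.subtype _)]
  congr 1
  ext y
  simp only [zmultiples_eq_zmultiples_iff_mem_and_addOrderOf_eq, mem_filter, mem_univ, true_and,
    Finset.mem_map, Function.Embedding.coe_subtype, Subtype.exists, addOrderOf_mk,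
    exists_and_left, exists_prop, exists_eq_right_right]
  exact and_comm

open scoped Classical in
theorem card_isAddCyclic_addSubgroup_eq_sum_inv_totient :
    (Nat.card {H : AddSubgroup G // IsAddCyclic H} : ℚ) = ∑ x : G, (φ (addOrderOf x) : ℚ)⁻¹ := by
  have hcyclic : {H : AddSubgroup G // IsAddCyclic H} ≃ (univ.image zmultiples : Finset _) :=
    Equiv.subtypeEquivRight fun H => by
      simp [AddSubgroup.isAddCyclic_iff_exists_zmultiples_eq_top]
  rw [Nat.card_congr hcyclic, Nat.card_eq_fintype_card, Fintype.card_coe, card_eq_sum_ones,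
    Nat.cast_sum, ← sum_fiberwise_of_maps_to (f := fun x : G => (φ (addOrderOf x) : ℚ)⁻¹)
      fun x _ => mem_image_of_mem (zmultiples : G → AddSubgroup G) (mem_univ x)]
  refine sum_congr rfl fun H hH => ?_
  obtain ⟨x, -, rfl⟩ := mem_image.mp hH
  have hfiber : ∀ y ∈ ({y | zmultiples y = zmultiples x} : Finset G),
      (φ (addOrderOf y) : ℚ)⁻¹ = (φ (addOrderOf x) : ℚ)⁻¹ := fun y hy => by
    rw [(zmultiples_eq_zmultiples_iff_mem_and_addOrderOf_eq.mp (mem_filter.mp hy).2).2]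
  have hφ : (φ (addOrderOf x) : ℚ) ≠ 0 := by simpa using isOfFinAddOrder_of_finite x
  rw [sum_congr rfl hfiber, sum_const, card_filter_zmultiples_eq_zmultiples, nsmul_eq_mul,
    Nat.cast_one, mul_inv_cancel₀ hφ]

end

theorem IsAddCyclic.sum_comp_addOrderOf {G M : Type*} [AddGroup G] [Fintype G] [IsAddCyclic G]
    [AddCommMonoid M] (f : ℕ → M) :
    ∑ x : G, f (addOrderOf x) = ∑ d ∈ (Fintype.card G).divisors, φ d • f d := by
  classical
  rw [← sum_fiberwise_of_maps_to (g := addOrderOf) (t := (Fintype.card G).divisors)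
    fun x _ => Nat.mem_divisors.mpr ⟨addOrderOf_dvd_card, Fintype.card_ne_zero⟩]
  refine sum_congr rfl fun d hd => ?_
  rw [sum_congr rfl fun x hx => congrArg f (mem_filter.mp hx).2, sum_const,
    IsAddCyclic.card_addOrderOf_eq_totient (Nat.dvd_of_mem_divisors hd)]

theorem card_cyclic_subgroups_zmod_prod (m n : ℕ) (hm : 0 < m) (hn : 0 < n) :
    Nat.card {H : AddSubgroup (ZMod m × ZMod n) // IsAddCyclic H} =
      ∑ a ∈ m.divisors, ∑ b ∈ n.divisors, Nat.totient (Nat.gcd a b) := by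
  have : NeZero m := ⟨hm.ne'⟩
  have : NeZero n := ⟨hn.ne'⟩
  have hsum := card_isAddCyclic_addSubgroup_eq_sum_inv_totient (G := ZMod m × ZMod n)
  simp only [Fintype.sum_prod_type, Prod.addOrderOf] at hsum
  rw [sum_congr rfl fun x _ => IsAddCyclic.sum_comp_addOrderOf
      fun b => (φ ((addOrderOf x).lcm b) : ℚ)⁻¹,
    IsAddCyclic.sum_comp_addOrderOf fun a => ∑ b ∈ _, φ b • (φ (a.lcm b) : ℚ)⁻¹,
    ZMod.card, ZMod.card] at hsum
  rw [← Nat.cast_inj (R := ℚ), hsum]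
  push_cast
  refine sum_congr rfl fun a ha => ?_
  rw [smul_sum]
  refine sum_congr rfl fun b hb => ?_
  rw [smul_smul, nsmul_eq_mul, ← div_eq_mul_inv, Nat.cast_mul]
  exact Nat.totient_mul_totient_div_totient_lcm (Nat.pos_of_mem_divisors ha).ne'
    (Nat.pos_of_mem_divisors hb).ne'
end

section
/- For all positive integers m and n, the total number of subgroups of Z_m × Z_n equals ∑_{a | m} ∑_{b | n} gcd(a,b). -/
/-!
Subgroups of `ZMod m × ZMod n` correspond to the subgroups of `ℤ × ℤ` containing `(m, 0)` and
`(0, n)`. Each of these has a unique Hermite basis `(a, c), (0, b)` with `a, b > 0` and `c` taken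
modulo `b`; it contains `(0, n)` iff `b ∣ n`, and it contains `(m, 0)` iff `a ∣ m` and
`(m / a) • c = 0` in `ZMod b`, an equation with `gcd (m / a) b` solutions. Summing over `a ∣ m`
and `b ∣ n` and replacing `a` by `m / a` gives the formula.
-/

open AddSubgroup

theorem AddSubgroup.prod_zmultiples_le_iff {G N : Type*} [AddGroup G] [AddGroup N] {x : G} {y : N}
    {H : AddSubgroup (G × N)} : (zmultiples x).prod (zmultiples y) ≤ H ↔ (x, 0) ∈ H ∧ (0, y) ∈ H := by
  simp only [prod_le_iff, AddMonoidHom.map_zmultiples, zmultiples_le, AddMonoidHom.inl_apply,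
    AddMonoidHom.inr_apply]

theorem card_addSubgroup_zmod_prod_eq_card_overlattice (m n : ℕ) :
    Nat.card (AddSubgroup (ZMod m × ZMod n)) =
      Nat.card {H : AddSubgroup (ℤ × ℤ) // ((m : ℤ), 0) ∈ H ∧ (0, (n : ℤ)) ∈ H} := by
  let φ : ℤ × ℤ →+ ZMod m × ZMod n := (Int.castAddHom _).prodMap (Int.castAddHom _)
  have hφ : Function.Surjective φ :=
    Prod.map_surjective.mpr ⟨ZMod.intCast_surjective, ZMod.intCast_surjective⟩
  have hker : φ.ker = (zmultiples (m : ℤ)).prod (zmultiples (n : ℤ)) := by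
    rw [AddMonoidHom.ker_prodMap, ZMod.ker_intCastAddHom, ZMod.ker_intCastAddHom]
  refine Nat.card_congr <| (QuotientAddGroup.quotientKerEquivOfSurjective φ hφ).symm.mapAddSubgroup
    |>.toEquiv.trans <| (QuotientAddGroup.comapMk'OrderIso φ.ker).toEquiv.trans <|
    Equiv.subtypeEquivRight fun H => ?_
  rw [hker, prod_zmultiples_le_iff]

theorem Int.exists_natCast_zmultiples_eq (H : AddSubgroup ℤ) : ∃ a : ℕ, zmultiples (a : ℤ) = H := by
  obtain ⟨a, rfl⟩ := Int.subgroup_cyclic H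
  exact ⟨a.natAbs, by rw [Int.zmultiples_natAbs, zmultiples_eq_closure]⟩

theorem ZMod.nsmul_eq_zero_iff_dvd {b : ℕ} [NeZero b] (k : ℕ) (c : ZMod b) :
    k • c = 0 ↔ (b : ℤ) ∣ k * c.val := by
  rw [← ZMod.intCast_zmod_eq_zero_iff_dvd]
  push_cast
  rw [ZMod.natCast_zmod_val, nsmul_eq_mul]

theorem ZMod.card_ker_nsmul (b k : ℕ) [NeZero b] :
    Nat.card (nsmulAddMonoidHom k : ZMod b →+ ZMod b).ker = b.gcd k := by
  rw [IsAddCyclic.card_nsmulAddMonoidHom_ker, Nat.card_zmod]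

def hermiteLattice (a b c : ℤ) : AddSubgroup (ℤ × ℤ) := closure {(a, c), (0, b)}

section hermiteLattice

variable {a b c : ℤ}

theorem mem_hermiteLattice {x : ℤ × ℤ} :
    x ∈ hermiteLattice a b c ↔ ∃ s t : ℤ, s * a = x.1 ∧ s * c + t * b = x.2 := by
  simp [hermiteLattice, mem_closure_pair, Prod.ext_iff]

theorem mk_mem_hermiteLattice (ha : a ≠ 0) {x y : ℤ} :
    (x, y) ∈ hermiteLattice a b c ↔ a ∣ x ∧ b ∣ y - x / a * c := by
  rw [mem_hermiteLattice]
  constructor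
  · rintro ⟨s, t, rfl, rfl⟩
    exact ⟨dvd_mul_left a s, t, by rw [Int.mul_ediv_cancel _ ha]; ring⟩
  · rintro ⟨⟨s, rfl⟩, t, ht⟩
    exact ⟨s, t, mul_comm s a, by rw [Int.mul_ediv_cancel_left _ ha] at ht; linarith⟩

theorem eq_hermiteLattice {H : AddSubgroup (ℤ × ℤ)}
    (hfst : H.map (AddMonoidHom.fst ℤ ℤ) = zmultiples a)
    (hsnd : H.comap (AddMonoidHom.inr ℤ ℤ) = zmultiples b) (hc : (a, c) ∈ H) :
    H = hermiteLattice a b c := by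
  refine le_antisymm (fun x hx => ?_) ?_
  · obtain ⟨s, hs⟩ : ∃ s : ℤ, s • a = x.1 :=
      mem_zmultiples_iff.mp (hfst ▸ mem_map_of_mem (AddMonoidHom.fst ℤ ℤ) hx)
    have hrest : x.2 - s * c ∈ H.comap (AddMonoidHom.inr ℤ ℤ) := by
      rw [mem_comap]
      convert H.sub_mem hx (H.zsmul_mem hc s) using 1
      ext <;> simp [← hs]
    obtain ⟨t, ht⟩ := mem_zmultiples_iff.mp (hsnd ▸ hrest)
    exact mem_hermiteLattice.mpr ⟨s, t, hs, by rw [← smul_eq_mul t, ht]; ring⟩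
  · rw [hermiteLattice, closure_le, Set.insert_subset_iff, Set.singleton_subset_iff]
    exact ⟨hc, (hsnd ▸ mem_zmultiples b : b ∈ H.comap (AddMonoidHom.inr ℤ ℤ))⟩

theorem mk_zero_mem_hermiteLattice (ha : a ≠ 0) {y : ℤ} :
    (0, y) ∈ hermiteLattice a b c ↔ b ∣ y := by
  simp [mk_mem_hermiteLattice ha]

theorem mk_self_mem_hermiteLattice : (a, c) ∈ hermiteLattice a b c :=
  subset_closure (Set.mem_insert _ _)

end hermiteLattice

theorem eq_of_hermiteLattice_eq {a a' b b' : ℕ} {c c' : ℤ} (ha : a ≠ 0) (ha' : a' ≠ 0)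
    (h : hermiteLattice a b c = hermiteLattice a' b' c') : a = a' ∧ b = b' ∧ (b : ℤ) ∣ c' - c := by
  have ha₀ : (a : ℤ) ≠ 0 := by exact_mod_cast ha
  have ha₀' : (a' : ℤ) ≠ 0 := by exact_mod_cast ha'
  have hac : ((a : ℤ), c) ∈ hermiteLattice a' b' c' := h ▸ mk_self_mem_hermiteLattice
  have hac' : ((a' : ℤ), c') ∈ hermiteLattice a b c := h ▸ mk_self_mem_hermiteLattice
  have hb : ((0 : ℤ), (b : ℤ)) ∈ hermiteLattice a' b' c' :=
    h ▸ (mk_zero_mem_hermiteLattice ha₀).mpr dvd_rfl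
  have hb' : ((0 : ℤ), (b' : ℤ)) ∈ hermiteLattice a b c :=
    h ▸ (mk_zero_mem_hermiteLattice ha₀').mpr dvd_rfl
  rw [mk_mem_hermiteLattice ha₀'] at hac
  rw [mk_mem_hermiteLattice ha₀] at hac'
  rw [mk_zero_mem_hermiteLattice ha₀'] at hb
  rw [mk_zero_mem_hermiteLattice ha₀] at hb'
  obtain rfl : a = a' := Nat.dvd_antisymm (by exact_mod_cast hac'.1) (by exact_mod_cast hac.1)
  obtain rfl : b = b' := Nat.dvd_antisymm (by exact_mod_cast hb') (by exact_mod_cast hb)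
  simpa [Int.ediv_self ha₀] using hac'.2

theorem mk_natCast_zero_mem_hermiteLattice {m a b : ℕ} [NeZero b] (ha : a ≠ 0) (ham : a ∣ m)
    (c : ZMod b) : ((m : ℤ), 0) ∈ hermiteLattice a b c.val ↔ (m / a) • c = 0 := by
  rw [mk_mem_hermiteLattice (by exact_mod_cast ha), ZMod.nsmul_eq_zero_iff_dvd, zero_sub, dvd_neg]
  simp [Int.natCast_dvd_natCast.mpr ham]

theorem exists_eq_hermiteLattice {m n : ℕ} (hm : m ≠ 0) (hn : n ≠ 0) {H : AddSubgroup (ℤ × ℤ)}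
    (hmH : ((m : ℤ), 0) ∈ H) (hnH : (0, (n : ℤ)) ∈ H) :
    ∃ a ∈ m.divisors, ∃ b ∈ n.divisors, ∃ c : ZMod b, H = hermiteLattice a b c.val := by
  obtain ⟨a, hfst⟩ := Int.exists_natCast_zmultiples_eq (H.map (AddMonoidHom.fst ℤ ℤ))
  obtain ⟨b, hsnd⟩ := Int.exists_natCast_zmultiples_eq (H.comap (AddMonoidHom.inr ℤ ℤ))
  have ham : a ∣ m := by
    have : (m : ℤ) ∈ H.map (AddMonoidHom.fst ℤ ℤ) := mem_map_of_mem _ hmH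
    rw [← hfst, Int.mem_zmultiples_iff] at this
    exact_mod_cast this
  have hbn : b ∣ n := by
    have : (n : ℤ) ∈ H.comap (AddMonoidHom.inr ℤ ℤ) := hnH
    rw [← hsnd, Int.mem_zmultiples_iff] at this
    exact_mod_cast this
  have : NeZero b := ⟨ne_zero_of_dvd_ne_zero hn hbn⟩
  obtain ⟨⟨_, y⟩, hy, rfl⟩ : (a : ℤ) ∈ H.map (AddMonoidHom.fst ℤ ℤ) := hfst ▸ mem_zmultiples _
  refine ⟨_, Nat.mem_divisors.mpr ⟨ham, hm⟩, b, Nat.mem_divisors.mpr ⟨hbn, hn⟩, y,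
    eq_hermiteLattice hfst.symm hsnd.symm ?_⟩
  have hdvd : (b : ℤ) ∣ ((y : ZMod b).val : ℤ) - y := by
    rw [← ZMod.intCast_eq_intCast_iff_dvd_sub, Int.cast_natCast, ZMod.natCast_zmod_val]
  have hshift : ((y : ZMod b).val : ℤ) - y ∈ H.comap (AddMonoidHom.inr ℤ ℤ) :=
    hsnd ▸ Int.mem_zmultiples_iff.mpr hdvd
  simpa using H.add_mem hy hshift

instance Nat.neZero_of_mem_divisors {n : ℕ} (b : n.divisors) : NeZero (b : ℕ) :=
  ⟨(Nat.pos_of_mem_divisors b.2).ne'⟩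

abbrev HermiteParams (m n : ℕ) : Type :=
  Σ a : m.divisors, Σ b : n.divisors, (nsmulAddMonoidHom (m / a : ℕ) : ZMod b →+ ZMod b).ker

def HermiteParams.lattice {m n : ℕ} (p : HermiteParams m n) :
    {H : AddSubgroup (ℤ × ℤ) // ((m : ℤ), 0) ∈ H ∧ (0, (n : ℤ)) ∈ H} :=
  ⟨hermiteLattice p.1 p.2.1 (p.2.2 : ZMod p.2.1).val,
    (mk_natCast_zero_mem_hermiteLattice (Nat.pos_of_mem_divisors p.1.2).ne'
      (Nat.dvd_of_mem_divisors p.1.2) _).mpr p.2.2.2,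
    (mk_zero_mem_hermiteLattice (by exact_mod_cast (Nat.pos_of_mem_divisors p.1.2).ne')).mpr
      (by exact_mod_cast Nat.dvd_of_mem_divisors p.2.1.2)⟩

theorem HermiteParams.lattice_bijective {m n : ℕ} (hm : m ≠ 0) (hn : n ≠ 0) :
    Function.Bijective (HermiteParams.lattice (m := m) (n := n)) := by
  constructor
  · rintro ⟨⟨a, ha⟩, ⟨b, hb⟩, c⟩ ⟨⟨a', ha'⟩, ⟨b', hb'⟩, c'⟩ h
    obtain ⟨rfl, rfl, hc⟩ := eq_of_hermiteLattice_eq (Nat.pos_of_mem_divisors ha).ne'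
      (Nat.pos_of_mem_divisors ha').ne' (congrArg Subtype.val h)
    have : NeZero b := ⟨(Nat.pos_of_mem_divisors hb).ne'⟩
    have hcc : (((c : ZMod b).val : ℤ) : ZMod b) = ((c' : ZMod b).val : ℤ) :=
      (ZMod.intCast_eq_intCast_iff_dvd_sub _ _ b).mpr hc
    simp only [Int.cast_natCast, ZMod.natCast_zmod_val] at hcc
    obtain rfl := Subtype.ext hcc
    rfl
  · rintro ⟨H, hmH, hnH⟩
    obtain ⟨a, ha, b, hb, c, rfl⟩ := exists_eq_hermiteLattice hm hn hmH hnH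
    have : NeZero b := ⟨(Nat.pos_of_mem_divisors hb).ne'⟩
    have hc := (mk_natCast_zero_mem_hermiteLattice (Nat.pos_of_mem_divisors ha).ne'
      (Nat.dvd_of_mem_divisors ha) c).mp hmH
    exact ⟨⟨⟨a, ha⟩, ⟨b, hb⟩, c, hc⟩, rfl⟩

theorem card_subgroups_zmod_prod (m n : ℕ) (hm : 0 < m) (hn : 0 < n) :
    Nat.card (AddSubgroup (ZMod m × ZMod n)) =
      ∑ a ∈ m.divisors, ∑ b ∈ n.divisors, Nat.gcd a b := by
  rw [card_addSubgroup_zmod_prod_eq_card_overlattice,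
    ← Nat.card_congr (Equiv.ofBijective _ (HermiteParams.lattice_bijective hm.ne' hn.ne')),
    Nat.card_sigma, ← Nat.sum_div_divisors m (fun a => ∑ b ∈ n.divisors, a.gcd b),
    ← Finset.sum_coe_sort m.divisors]
  refine Finset.sum_congr rfl fun a _ => ?_
  rw [Nat.card_sigma, ← Finset.sum_coe_sort n.divisors]
  refine Finset.sum_congr rfl fun b _ => ?_
  rw [ZMod.card_ker_nsmul, Nat.gcd_comm]
end

section
/- For positive integers n_1, ..., n_k, the number of cyclic subgroups of Z_{n_1} × ⋯ × Z_{n_k} equals ∑ φ(a_1)⋯φ(a_k)/φ(lcm(a_1,...,a_k)), the sum being over all tuples (a_1,...,a_k) with a_i | n_i for each i. -/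
/-!
Every cyclic subgroup `H` of a finite group is `zmultiples g` for exactly `φ |H|` elements `g`, so
weighting each `g` by `1 / φ (addOrderOf g)` counts every cyclic subgroup once. In a product of
cyclic groups the order of `g` is the lcm of the orders `a i` of its coordinates, and the number
of `g` with prescribed coordinate orders `a i ∣ |G i|` is `∏ φ (a i)`.
-/

open AddSubgroup Finset Nat

section CyclicSubgroups

variable {G : Type*} [AddGroup G]

theorem zmultiples_eq_iff_mem_and_addOrderOf_eq [Finite G] {g : G} {H : AddSubgroup G} :
    zmultiples g = H ↔ g ∈ H ∧ addOrderOf g = Nat.card H := by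
  constructor
  · rintro rfl
    exact ⟨mem_zmultiples g, (Nat.card_zmultiples g).symm⟩
  · rintro ⟨hg, hord⟩
    exact eq_of_le_of_card_ge (zmultiples_le.2 hg) (by rw [Nat.card_zmultiples, hord])

open scoped Classical in
theorem card_filter_zmultiples_eq [Fintype G] (g₀ : G) :
    #{g : G | zmultiples g = zmultiples g₀} = φ (addOrderOf g₀) := by
  have hfiber : ({g : G | zmultiples g = zmultiples g₀} : Finset G) =
      ({h : zmultiples g₀ | addOrderOf h = addOrderOf g₀} : Finset _).map
        (Function.Embedding.subtype _) := by
    ext g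
    rw [mem_filter, zmultiples_eq_iff_mem_and_addOrderOf_eq, Nat.card_zmultiples]
    simp only [mem_map, mem_filter, mem_univ, true_and, Function.Embedding.coe_subtype,
      Subtype.exists, addOrderOf_mk, exists_prop, exists_eq_right_right]
  have hdvd : addOrderOf g₀ ∣ Fintype.card (zmultiples g₀) := by
    rw [← Nat.card_eq_fintype_card, Nat.card_zmultiples]
  rw [hfiber, card_map, IsAddCyclic.card_addOrderOf_eq_totient hdvd]

theorem card_isAddCyclic_subgroups_eq_sum_inv_totient [Fintype G] :
    (Nat.card {H : AddSubgroup G // IsAddCyclic H} : ℚ) = ∑ g : G, 1 / (φ (addOrderOf g) : ℚ) := by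
  classical
  have hcyclic : {H : AddSubgroup G | IsAddCyclic H} = ↑(univ.image fun g : G => zmultiples g) := by
    ext H
    simp [AddSubgroup.isAddCyclic_iff_exists_zmultiples_eq_top]
  have hfiber (g₀ : G) :
      ∑ g ∈ univ with zmultiples g = zmultiples g₀, 1 / (φ (addOrderOf g) : ℚ) = 1 := by
    have hord (g : G) (hg : g ∈ ({g | zmultiples g = zmultiples g₀} : Finset G)) :
        addOrderOf g = addOrderOf g₀ := by
      rw [← Nat.card_zmultiples, (mem_filter.1 hg).2, Nat.card_zmultiples]
    have hpos : (φ (addOrderOf g₀) : ℚ) ≠ 0 := by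
      exact_mod_cast (totient_pos.2 (addOrderOf_pos g₀)).ne'
    rw [sum_congr rfl fun g hg => by rw [hord g hg], sum_const, card_filter_zmultiples_eq,
      nsmul_eq_mul, mul_one_div_cancel hpos]
  calc (Nat.card {H : AddSubgroup G // IsAddCyclic H} : ℚ)
      = #(univ.image fun g : G => zmultiples g) := by
        rw [← Set.ncard_coe_finset, ← hcyclic, ← Nat.card_coe_set_eq]
        rfl
    _ = ∑ _ ∈ univ.image fun g : G => zmultiples g, (1 : ℚ) := by simp
    _ = ∑ g : G, 1 / (φ (addOrderOf g) : ℚ) := sum_image' _ fun g₀ _ => (hfiber g₀).symm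

end CyclicSubgroups

section PiCyclic

variable {ι : Type*} [Fintype ι] [DecidableEq ι] {G : ι → Type*} [∀ i, AddGroup (G i)]
  [∀ i, Fintype (G i)]

theorem card_filter_addOrderOf_apply_eq [∀ i, IsAddCyclic (G i)] {a : ι → ℕ}
    (ha : ∀ i, a i ∣ Fintype.card (G i)) :
    #{g : ∀ i, G i | ∀ i, addOrderOf (g i) = a i} = ∏ i, φ (a i) := by
  have hpi : ({g : ∀ i, G i | ∀ i, addOrderOf (g i) = a i} : Finset _) =
      Fintype.piFinset fun i => ({x : G i | addOrderOf x = a i} : Finset _) := by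
    ext g
    simp
  rw [hpi, Fintype.card_piFinset]
  exact prod_congr rfl fun i _ => IsAddCyclic.card_addOrderOf_eq_totient (ha i)

theorem card_isAddCyclic_subgroups_pi [∀ i, IsAddCyclic (G i)] :
    (Nat.card {H : AddSubgroup (∀ i, G i) // IsAddCyclic H} : ℚ) =
      ∑ a ∈ Fintype.piFinset (fun i => (Fintype.card (G i)).divisors),
        (∏ i, (φ (a i) : ℚ)) / (φ (univ.lcm a) : ℚ) := by
  have hmaps : ∀ g ∈ (univ : Finset (∀ i, G i)),
      (fun i => addOrderOf (g i)) ∈ Fintype.piFinset fun i => (Fintype.card (G i)).divisors :=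
    fun g _ => Fintype.mem_piFinset.2 fun i =>
      mem_divisors.2 ⟨addOrderOf_dvd_card, Fintype.card_ne_zero⟩
  rw [card_isAddCyclic_subgroups_eq_sum_inv_totient, ← sum_fiberwise_of_maps_to hmaps]
  refine sum_congr rfl fun a ha => ?_
  have hord (g : ∀ i, G i) (hg : g ∈ ({g | (fun i => addOrderOf (g i)) = a} : Finset _)) :
      addOrderOf g = univ.lcm a := by
    rw [Pi.addOrderOf, (mem_filter.1 hg).2]
  have hcard : #{g : ∀ i, G i | (fun i => addOrderOf (g i)) = a} = ∏ i, φ (a i) := by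
    simp only [funext_iff]
    exact card_filter_addOrderOf_apply_eq fun i => (mem_divisors.1 (Fintype.mem_piFinset.1 ha i)).1
  rw [sum_congr rfl fun g hg => by rw [hord g hg], sum_const, hcard, nsmul_eq_mul, cast_prod,
    mul_one_div]

end PiCyclic

theorem card_cyclic_subgroups_pi_zmod (k : ℕ) (n : Fin k → ℕ) (hn : ∀ i, 0 < n i) :
    (Nat.card {H : AddSubgroup (∀ i, ZMod (n i)) // IsAddCyclic H} : ℚ) =
      ∑ a ∈ Fintype.piFinset (fun i => (n i).divisors),
        (∏ i, (Nat.totient (a i) : ℚ)) / (Nat.totient (Finset.univ.lcm a) : ℚ) := by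
  have (i : Fin k) : NeZero (n i) := ⟨(hn i).ne'⟩
  simpa only [ZMod.card] using card_isAddCyclic_subgroups_pi (G := fun i => ZMod (n i))
end

section
/- For a prime p and integers 1 ≤ α_1 ≤ α_2, the number of cyclic subgroups of Z_{p^{α_1}} × Z_{p^{α_2}} equals 2 + 2p + ⋯ + 2p^{α_1 - 1} + (α_2 - α_1 + 1)p^{α_1}. -/
/-!
A cyclic subgroup of order `d` has exactly `φ d` generators, so the cyclic subgroups of order
`p ^ (k + 1)` number `#{x | addOrderOf x = p ^ (k + 1)} / φ (p ^ (k + 1))`. Elements of order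
dividing `p ^ k` form the `p ^ k`-torsion, which in `ZMod (p ^ a) × ZMod (p ^ b)` has
`p ^ min a k * p ^ min b k` elements; the difference of two consecutive torsion counts is the number
of elements of order exactly `p ^ (k + 1)`. This gives `p ^ k + p ^ (k + 1)` cyclic subgroups of
order `p ^ (k + 1)` while `k < a`, then `p ^ a` of each order up to `p ^ b`, plus the trivial
subgroup; summing these gives the formula.
-/

open Finset AddSubgroup

theorem Nat.gcd_pow_pow_eq_pow_min (p a b : ℕ) : Nat.gcd (p ^ a) (p ^ b) = p ^ min a b := by
  rcases le_total a b with h | h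
  · rw [min_eq_left h, Nat.gcd_eq_left (pow_dvd_pow p h)]
  · rw [min_eq_right h, Nat.gcd_eq_right (pow_dvd_pow p h)]

theorem Nat.dvd_prime_pow_succ_iff {p d k : ℕ} (hp : p.Prime) :
    d ∣ p ^ (k + 1) ↔ d ∣ p ^ k ∨ d = p ^ (k + 1) := by
  refine ⟨fun h => ?_, ?_⟩
  · obtain ⟨j, hj, rfl⟩ := (Nat.dvd_prime_pow hp).mp h
    rcases Nat.lt_or_ge j (k + 1) with hlt | hge
    · exact .inl (pow_dvd_pow p (Nat.lt_succ_iff.mp hlt))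
    · exact .inr (by rw [le_antisymm hj hge])
  · rintro (h | rfl)
    · exact h.trans (pow_dvd_pow p k.le_succ)
    · exact dvd_rfl

theorem sum_range_succ_of_two_phase {p a b : ℕ} (hab : a ≤ b) (C : ℕ → ℕ) (h0 : C 0 = 1)
    (hlow : ∀ k < a, C (k + 1) = p ^ k + p ^ (k + 1))
    (hhigh : ∀ k, a ≤ k → k < b → C (k + 1) = p ^ a) :
    ∑ k ∈ range (b + 1), C k = ∑ i ∈ range a, 2 * p ^ i + (b - a + 1) * p ^ a := by
  have hshift : ∑ k ∈ range a, p ^ (k + 1) + 1 = ∑ k ∈ range a, p ^ k + p ^ a := by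
    simpa using (sum_range_succ' (p ^ ·) a).symm.trans (sum_range_succ (p ^ ·) a)
  have hfirst : ∑ k ∈ range (a + 1), C k = ∑ i ∈ range a, 2 * p ^ i + p ^ a := by
    rw [sum_range_succ', sum_congr rfl fun k hk => hlow k (mem_range.mp hk), h0,
      sum_add_distrib, add_assoc, hshift, ← add_assoc, ← sum_add_distrib]
    simp only [two_mul]
  have hrest : ∑ k ∈ Ico (a + 1) (b + 1), C k = (b - a) * p ^ a := by
    rw [sum_congr rfl (g := fun _ => p ^ a) fun k hk => ?_, sum_const, Nat.card_Ico,
      Nat.add_sub_add_right, smul_eq_mul]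
    obtain ⟨hak, hkb⟩ := mem_Ico.mp hk
    obtain ⟨j, rfl⟩ : ∃ j, k = j + 1 := ⟨k - 1, by omega⟩
    exact hhigh j (by omega) (by omega)
  rw [← sum_range_add_sum_Ico _ (by omega : a + 1 ≤ b + 1), hfirst, hrest]
  ring

section

variable {G H : Type*} [AddMonoid G] [AddMonoid H] [Fintype G] [Fintype H]

theorem card_prod_addOrderOf_dvd (n : ℕ) :
    #{x : G × H | addOrderOf x ∣ n} =
      #{x : G | addOrderOf x ∣ n} * #{y : H | addOrderOf y ∣ n} := by
  simp only [Prod.addOrderOf, Nat.lcm_dvd_iff]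
  rw [← card_product, ← filter_product, univ_product_univ]

theorem card_addOrderOf_eq_prime_pow_succ_add {p : ℕ} (hp : p.Prime) (k : ℕ) :
    #{x : G | addOrderOf x = p ^ (k + 1)} + #{x : G | addOrderOf x ∣ p ^ k} =
      #{x : G | addOrderOf x ∣ p ^ (k + 1)} := by
  rw [← card_filter_add_card_filter_not (s := {x : G | addOrderOf x ∣ p ^ (k + 1)})
    (fun x => addOrderOf x = p ^ (k + 1)), filter_filter, filter_filter]
  congr 2
  · exact filter_congr fun x _ => ⟨fun h => ⟨h ▸ dvd_rfl, h⟩, fun h => h.2⟩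
  · refine filter_congr fun x _ => ?_
    rw [Nat.dvd_prime_pow_succ_iff hp]
    refine ⟨fun h => ⟨.inl h, fun h' => ?_⟩, fun ⟨h, h'⟩ => h.resolve_right h'⟩
    rw [h', Nat.pow_dvd_pow_iff_le_right hp.one_lt] at h
    omega

end

theorem IsAddCyclic.card_addOrderOf_dvd {G : Type*} [AddCommGroup G] [Fintype G] [IsAddCyclic G]
    (n : ℕ) : #{x : G | addOrderOf x ∣ n} = (Fintype.card G).gcd n := by
  rw [← Nat.card_eq_fintype_card, ← IsAddCyclic.card_nsmulAddMonoidHom_ker,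
    ← Fintype.card_subtype, ← Nat.card_eq_fintype_card]
  simp only [AddMonoidHom.mem_ker, nsmulAddMonoidHom_apply, addOrderOf_dvd_iff_nsmul_eq_zero]

section

open scoped Classical

variable {G : Type*} [AddGroup G] [Fintype G]

theorem card_generators_eq_totient (H : AddSubgroup G) [IsAddCyclic H] :
    #{g : G | zmultiples g = H} = (Nat.card H).totient := by
  have hgen (g : G) : zmultiples g = H ↔ g ∈ H ∧ addOrderOf g = Nat.card H :=
    ⟨by rintro rfl; exact ⟨mem_zmultiples g, (Nat.card_zmultiples g).symm⟩,
      fun ⟨hg, ho⟩ =>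
        eq_of_le_of_card_ge (zmultiples_le_of_mem hg) (by rw [Nat.card_zmultiples, ho])⟩
  simp only [hgen]
  rw [← IsAddCyclic.card_addOrderOf_eq_totient (α := H)
      (Nat.card_eq_fintype_card (α := H) ▸ dvd_rfl),
    ← Fintype.card_subtype, ← Fintype.card_subtype]
  simp only [← AddSubgroup.addOrderOf_coe]
  exact Fintype.card_congr (Equiv.subtypeSubtypeEquivSubtypeInter (· ∈ H) _).symm

theorem card_isAddCyclic_card_eq_mul_totient (d : ℕ) :
    #{H : AddSubgroup G | IsAddCyclic H ∧ Nat.card H = d} * d.totient =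
      #{g : G | addOrderOf g = d} := by
  rw [card_eq_sum_card_fiberwise (f := zmultiples)
    (t := {H : AddSubgroup G | IsAddCyclic H ∧ Nat.card H = d})
    (fun g hg => by
      simp only [coe_filter, mem_univ, true_and, Set.mem_ofPred_eq] at hg ⊢
      exact ⟨isAddCyclic_zmultiples g, (Nat.card_zmultiples g).trans hg⟩),
    ← smul_eq_mul, ← sum_const]
  refine sum_congr rfl fun H hH => ?_
  obtain ⟨hcyc, rfl⟩ := (mem_filter.mp hH).2
  rw [← card_generators_eq_totient, filter_filter]
  congr 1
  exact filter_congr fun g _ =>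
    ⟨fun h => ⟨h ▸ (Nat.card_zmultiples g).symm, h⟩, fun h => h.2⟩

theorem card_isAddCyclic_eq_sum_divisors {N : ℕ} (hN0 : N ≠ 0)
    (hN : ∀ g : G, addOrderOf g ∣ N) :
    #{H : AddSubgroup G | IsAddCyclic H} =
      ∑ d ∈ N.divisors, #{H : AddSubgroup G | IsAddCyclic H ∧ Nat.card H = d} := by
  refine (card_eq_sum_card_fiberwise (f := fun H : AddSubgroup G => Nat.card H) (t := N.divisors)
    fun H hH => ?_).trans ?_
  · simp only [coe_filter, mem_univ, true_and, Set.mem_ofPred_eq] at hH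
    obtain ⟨g, rfl⟩ := (AddSubgroup.isAddCyclic_iff_exists_zmultiples_eq_top H).mp hH
    exact Nat.mem_divisors.mpr ⟨by simpa only [Nat.card_zmultiples] using hN g, hN0⟩
  · simp only [filter_filter]

theorem card_isAddCyclic_card_eq_one :
    #{H : AddSubgroup G | IsAddCyclic H ∧ Nat.card H = 1} = 1 := by
  have h := card_isAddCyclic_card_eq_mul_totient (G := G) 1
  rw [Nat.totient_one, mul_one] at h
  rw [h, card_eq_one]
  exact ⟨0, by ext; simp⟩

end

section

variable {p : ℕ} [hp : Fact p.Prime] {a b : ℕ}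

theorem card_zmod_prod_addOrderOf_dvd (a b k : ℕ) :
    #{x : ZMod (p ^ a) × ZMod (p ^ b) | addOrderOf x ∣ p ^ k} = p ^ min a k * p ^ min b k := by
  rw [card_prod_addOrderOf_dvd, IsAddCyclic.card_addOrderOf_dvd, IsAddCyclic.card_addOrderOf_dvd,
    ZMod.card, ZMod.card, Nat.gcd_pow_pow_eq_pow_min, Nat.gcd_pow_pow_eq_pow_min]

theorem addOrderOf_dvd_pow_of_le (hab : a ≤ b) (x : ZMod (p ^ a) × ZMod (p ^ b)) :
    addOrderOf x ∣ p ^ b := by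
  rw [Prod.addOrderOf]
  refine Nat.lcm_dvd (addOrderOf_dvd_card.trans ?_) (addOrderOf_dvd_card.trans ?_)
  · rw [ZMod.card]; exact pow_dvd_pow p hab
  · rw [ZMod.card]

open scoped Classical in
theorem card_isAddCyclic_zmod_prod_mul_totient_add {k : ℕ} (hkb : k < b) :
    #{H : AddSubgroup (ZMod (p ^ a) × ZMod (p ^ b)) | IsAddCyclic H ∧ Nat.card H = p ^ (k + 1)} *
        (p ^ (k + 1)).totient + p ^ min a k * p ^ k = p ^ min a (k + 1) * p ^ (k + 1) := by
  have h := card_addOrderOf_eq_prime_pow_succ_add (G := ZMod (p ^ a) × ZMod (p ^ b)) hp.out k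
  rwa [card_zmod_prod_addOrderOf_dvd, card_zmod_prod_addOrderOf_dvd, min_eq_right (a := b) hkb.le,
    min_eq_right (b := k + 1) hkb, ← card_isAddCyclic_card_eq_mul_totient] at h

open scoped Classical in
theorem card_isAddCyclic_zmod_prod_card_eq_pow_succ_of_lt (hab : a ≤ b) {k : ℕ} (hka : k < a) :
    #{H : AddSubgroup (ZMod (p ^ a) × ZMod (p ^ b)) | IsAddCyclic H ∧ Nat.card H = p ^ (k + 1)} =
      p ^ k + p ^ (k + 1) := by
  have h := card_isAddCyclic_zmod_prod_mul_totient_add (p := p) (a := a) (hka.trans_le hab)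
  rw [min_eq_right hka.le, min_eq_right hka] at h
  refine Nat.eq_of_mul_eq_mul_right (Nat.totient_pos.mpr (pow_pos hp.out.pos (k + 1))) ?_
  have key : (p ^ k + p ^ (k + 1)) * (p ^ (k + 1)).totient + p ^ k * p ^ k =
      p ^ (k + 1) * p ^ (k + 1) := by
    obtain ⟨m, rfl⟩ : ∃ m, p = m + 1 := ⟨p - 1, (Nat.sub_add_cancel hp.out.one_le).symm⟩
    rw [Nat.totient_prime_pow_succ hp.out, Nat.add_sub_cancel]
    ring
  omega

open scoped Classical in
theorem card_isAddCyclic_zmod_prod_card_eq_pow_succ_of_le {k : ℕ} (hak : a ≤ k) (hkb : k < b) :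
    #{H : AddSubgroup (ZMod (p ^ a) × ZMod (p ^ b)) | IsAddCyclic H ∧ Nat.card H = p ^ (k + 1)} =
      p ^ a := by
  have h := card_isAddCyclic_zmod_prod_mul_totient_add (p := p) (a := a) hkb
  rw [min_eq_left hak, min_eq_left (hak.trans k.le_succ)] at h
  refine Nat.eq_of_mul_eq_mul_right (Nat.totient_pos.mpr (pow_pos hp.out.pos (k + 1))) ?_
  have key : p ^ a * (p ^ (k + 1)).totient + p ^ a * p ^ k = p ^ a * p ^ (k + 1) := by
    obtain ⟨m, rfl⟩ : ∃ m, p = m + 1 := ⟨p - 1, (Nat.sub_add_cancel hp.out.one_le).symm⟩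
    rw [Nat.totient_prime_pow_succ hp.out, Nat.add_sub_cancel]
    ring
  omega

end

theorem card_cyclic_subgroups_rank_two_p_group_general (p α₁ α₂ : ℕ) (hp : p.Prime)
    (h12 : α₁ ≤ α₂) :
    Nat.card {H : AddSubgroup (ZMod (p ^ α₁) × ZMod (p ^ α₂)) // IsAddCyclic H} =
      (∑ i ∈ Finset.range α₁, 2 * p ^ i) + (α₂ - α₁ + 1) * p ^ α₁ := by
  classical
  have : Fact p.Prime := ⟨hp⟩
  rw [Nat.card_eq_fintype_card, Fintype.card_subtype,
    card_isAddCyclic_eq_sum_divisors (pow_ne_zero _ hp.ne_zero) (addOrderOf_dvd_pow_of_le h12),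
    Nat.sum_divisors_prime_pow hp]
  exact sum_range_succ_of_two_phase h12 _ card_isAddCyclic_card_eq_one
    (fun k hk => card_isAddCyclic_zmod_prod_card_eq_pow_succ_of_lt h12 hk)
    (fun k hak hkb => card_isAddCyclic_zmod_prod_card_eq_pow_succ_of_le hak hkb)

theorem card_cyclic_subgroups_rank_two_p_group (p α₁ α₂ : ℕ) (hp : p.Prime)
    (h1 : 1 ≤ α₁) (h12 : α₁ ≤ α₂) :
    Nat.card {H : AddSubgroup (ZMod (p ^ α₁) × ZMod (p ^ α₂)) // IsAddCyclic H} =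
      (∑ i ∈ Finset.range α₁, 2 * p ^ i) + (α₂ - α₁ + 1) * p ^ α₁ :=
  card_cyclic_subgroups_rank_two_p_group_general p α₁ α₂ hp h12
end

section
/- For a prime p and integers 1 ≤ α_1 ≤ α_2, the total number of subgroups of Z_{p^{α_1}} × Z_{p^{α_2}} equals ((α_2−α_1+1)p^{α_1+2} − (α_2−α_1−1)p^{α_1+1} − (α_1+α_2+3)p + (α_1+α_2+1))/(p−1)^2. -/
/-!
A subgroup `H ≤ A × B` is determined by its projection `C` to `A`, its intersection `K` with `B`,
and the homomorphism `C → B ⧸ K` whose graph, taken modulo `K`, it is. When `A` and `B` are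
finite cyclic, `C` is determined by its order `d ∣ |A|` and `K` by its index `e ∣ |B|`, and there
are `gcd d e` homomorphisms between cyclic groups of orders `d` and `e`. For `A = ℤ/p^α₁` and
`B = ℤ/p^α₂` this leaves the double sum `∑_{i ≤ α₁} ∑_{j ≤ α₂} p ^ min i j`, a sum of geometric
series.
-/

open Finset

namespace AddSubgroup

variable {A B : Type*} [AddCommGroup A] [AddCommGroup B]

def graphMod (C : AddSubgroup A) (K : AddSubgroup B) (f : C →+ B ⧸ K) : AddSubgroup (A × B) where
  carrier := {x | ∃ h : x.1 ∈ C, f ⟨x.1, h⟩ = x.2}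
  zero_mem' := ⟨C.zero_mem, f.map_zero⟩
  add_mem' := by
    rintro x y ⟨hx, hfx⟩ ⟨hy, hfy⟩
    exact ⟨C.add_mem hx hy, by simpa [hfx, hfy] using f.map_add ⟨_, hx⟩ ⟨_, hy⟩⟩
  neg_mem' := by
    rintro x ⟨hx, hfx⟩
    exact ⟨C.neg_mem hx, (f.map_neg ⟨_, hx⟩).trans (by rw [hfx]; rfl)⟩

variable {C : AddSubgroup A} {K : AddSubgroup B} {f : C →+ B ⧸ K}

theorem map_fst_graphMod : (graphMod C K f).map (AddMonoidHom.fst A B) = C := by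
  ext a
  refine ⟨fun ⟨x, ⟨hx, _⟩, hxa⟩ => hxa ▸ hx, fun ha => ?_⟩
  obtain ⟨b, hb⟩ := QuotientAddGroup.mk_surjective (f ⟨a, ha⟩)
  exact ⟨(a, b), ⟨ha, hb.symm⟩, rfl⟩

theorem comap_inr_graphMod : (graphMod C K f).comap (AddMonoidHom.inr A B) = K := by
  ext b
  change (∃ h, f ⟨0, h⟩ = b) ↔ b ∈ K
  rw [← QuotientAddGroup.eq_zero_iff b]
  exact ⟨fun ⟨_, hb⟩ => hb ▸ f.map_zero, fun hb => ⟨C.zero_mem, f.map_zero.trans hb.symm⟩⟩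

theorem graphMod_injective : Function.Injective (graphMod C K) := by
  intro f g h
  ext a
  obtain ⟨b, hb⟩ := QuotientAddGroup.mk_surjective (f a)
  obtain ⟨_, hg⟩ : ((a : A), b) ∈ graphMod C K g := h ▸ ⟨a.2, hb.symm⟩
  exact hb.symm.trans hg.symm

theorem exists_graphMod_eq (H : AddSubgroup (A × B)) :
    ∃ f : H.map (AddMonoidHom.fst A B) →+ B ⧸ H.comap (AddMonoidHom.inr A B),
      graphMod _ _ f = H := by
  set C := H.map (AddMonoidHom.fst A B)
  set K := H.comap (AddMonoidHom.inr A B)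
  let π : H →+ C := (AddMonoidHom.fst A B).addSubgroupMap H
  have hπ : Function.Surjective π := (AddMonoidHom.fst A B).addSubgroupMap_surjective H
  let g : H →+ B ⧸ K := (QuotientAddGroup.mk' K).comp ((AddMonoidHom.snd A B).comp H.subtype)
  have hker : π.ker ≤ g.ker := by
    rintro ⟨⟨a, b⟩, hab⟩ ha
    obtain rfl : a = 0 := congrArg Subtype.val ha
    exact (QuotientAddGroup.eq_zero_iff b).2 hab
  let f := π.liftOfRightInverse _ (Function.rightInverse_surjInv hπ) ⟨g, hker⟩
  have hf (x : H) : f (π x) = g x := π.liftOfRightInverse_comp_apply _ _ ⟨g, hker⟩ x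
  refine ⟨f, le_antisymm ?_ fun x hx => ⟨⟨x, hx, rfl⟩, hf ⟨x, hx⟩⟩⟩
  rintro ⟨a, b⟩ ⟨ha, e⟩
  obtain ⟨x, hx, rfl⟩ := id ha
  have hb : ((0 : A), b - x.2) ∈ H := by
    change b - x.2 ∈ K
    rw [← QuotientAddGroup.eq_iff_sub_mem]
    exact e.symm.trans (hf ⟨x, hx⟩)
  convert H.add_mem hx hb using 1
  ext <;> simp

theorem graphMod_bijective :
    Function.Bijective fun t : Σ (C : AddSubgroup A) (K : AddSubgroup B), C →+ B ⧸ K =>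
      graphMod t.1 t.2.1 t.2.2 := by
  refine ⟨?_, fun H => ?_⟩
  · rintro ⟨C, K, f⟩ ⟨C', K', f'⟩ (h : graphMod C K f = graphMod C' K' f')
    obtain rfl : C = C' := by simpa only [map_fst_graphMod] using congrArg (map (.fst A B)) h
    obtain rfl : K = K' := by simpa only [comap_inr_graphMod] using congrArg (comap (.inr A B)) h
    obtain rfl := graphMod_injective h
    rfl
  · obtain ⟨f, hf⟩ := exists_graphMod_eq H
    exact ⟨⟨_, _, f⟩, hf⟩

theorem card_addSubgroup_prod [Finite A] [Finite B] [Fintype (AddSubgroup A)]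
    [Fintype (AddSubgroup B)] :
    Nat.card (AddSubgroup (A × B)) =
      ∑ C : AddSubgroup A, ∑ K : AddSubgroup B, Nat.card (C →+ B ⧸ K) := by
  have (C : AddSubgroup A) (K : AddSubgroup B) : Finite (C →+ B ⧸ K) :=
    .of_injective _ DFunLike.coe_injective
  simp_rw [← Nat.card_eq_of_bijective _ graphMod_bijective, Nat.card_sigma]

end AddSubgroup

namespace IsAddCyclic

theorem card_addMonoidHom (G G' : Type*) [AddGroup G] [IsAddCyclic G] [AddCommGroup G']
    [IsAddCyclic G'] [Finite G'] :
    Nat.card (G →+ G') = (Nat.card G).gcd (Nat.card G') := by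
  let e : (G →+ G') ≃ (nsmulAddMonoidHom (Nat.card G) : G' →+ G').ker :=
    (zmodAddCyclicAddEquiv ‹_›).addMonoidHomCongrLeftEquiv.symm.trans <|
      (ZMod.lift _).symm.trans <|
        ((zmultiplesHom G').subtypeEquiv fun x => by simp).symm
  rw [Nat.card_congr e, card_nsmulAddMonoidHom_ker, Nat.gcd_comm]

variable {G : Type*} [AddCommGroup G] [IsAddCyclic G] [Finite G]

theorem eq_ker_nsmul_card (H : AddSubgroup G) :
    H = (nsmulAddMonoidHom (Nat.card H) : G →+ G).ker := by
  refine AddSubgroup.eq_of_le_of_card_ge (fun x hx => ?_) ?_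
  · exact congrArg Subtype.val (card_nsmul_eq_zero' (x := (⟨x, hx⟩ : H)))
  · rw [card_nsmulAddMonoidHom_ker, Nat.gcd_eq_right H.card_addSubgroup_dvd_card]

variable (G)

noncomputable def addSubgroupEquivDivisors : AddSubgroup G ≃ (Nat.card G).divisors where
  toFun H := ⟨Nat.card H, Nat.mem_divisors.2 ⟨H.card_addSubgroup_dvd_card, Nat.card_pos.ne'⟩⟩
  invFun d := (nsmulAddMonoidHom d.1 : G →+ G).ker
  left_inv H := (eq_ker_nsmul_card H).symm
  right_inv d := Subtype.ext <| by
    change Nat.card (nsmulAddMonoidHom d.1 : G →+ G).ker = d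
    rw [card_nsmulAddMonoidHom_ker, Nat.gcd_eq_right (Nat.dvd_of_mem_divisors d.2)]

variable {M : Type*} [AddCommMonoid M] [Fintype (AddSubgroup G)]

theorem sum_addSubgroup_card (f : ℕ → M) :
    ∑ H : AddSubgroup G, f (Nat.card H) = ∑ d ∈ (Nat.card G).divisors, f d := by
  rw [← sum_coe_sort (Nat.card G).divisors f]
  exact Fintype.sum_equiv (addSubgroupEquivDivisors G) _ _ fun _ => rfl

theorem sum_addSubgroup_index (f : ℕ → M) :
    ∑ H : AddSubgroup G, f H.index = ∑ d ∈ (Nat.card G).divisors, f d := by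
  have index_eq (H : AddSubgroup G) : H.index = Nat.card G / Nat.card H := by
    rw [← H.card_mul_index, Nat.mul_div_cancel_left _ Nat.card_pos]
  simp_rw [index_eq]
  rw [sum_addSubgroup_card G (fun d => f (Nat.card G / d)), Nat.sum_div_divisors]

end IsAddCyclic

theorem card_addSubgroup_prod_of_isAddCyclic (A B : Type*) [AddCommGroup A] [AddCommGroup B]
    [IsAddCyclic A] [IsAddCyclic B] [Finite A] [Finite B] :
    Nat.card (AddSubgroup (A × B)) =
      ∑ d ∈ (Nat.card A).divisors, ∑ e ∈ (Nat.card B).divisors, d.gcd e := by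
  let _ := Fintype.ofFinite (AddSubgroup A)
  let _ := Fintype.ofFinite (AddSubgroup B)
  have (K : AddSubgroup B) : IsAddCyclic (B ⧸ K) :=
    isAddCyclic_of_surjective _ (QuotientAddGroup.mk'_surjective K)
  simp_rw [AddSubgroup.card_addSubgroup_prod, IsAddCyclic.card_addMonoidHom,
    ← AddSubgroup.index_eq_card, IsAddCyclic.sum_addSubgroup_index B]
  exact IsAddCyclic.sum_addSubgroup_card A (fun d => ∑ e ∈ (Nat.card B).divisors, d.gcd e)

theorem Nat.gcd_pow_pow_eq_pow_min_s14 (p i j : ℕ) : (p ^ i).gcd (p ^ j) = p ^ min i j := by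
  rcases le_total i j with h | h
  · rw [Nat.gcd_eq_left (pow_dvd_pow p h), min_eq_left h]
  · rw [Nat.gcd_eq_right (pow_dvd_pow p h), min_eq_right h]

theorem sum_range_pow_min_of_le {R : Type*} [CommSemiring R] (x : R) {i b : ℕ} (hib : i ≤ b) :
    ∑ j ∈ range (b + 1), x ^ min i j = ∑ j ∈ range i, x ^ j + (b + 1 - i : ℕ) * x ^ i := by
  rw [← sum_range_add_sum_Ico _ (by omega : i ≤ b + 1)]
  congr 1
  · exact sum_congr rfl fun j hj => by rw [min_eq_right (mem_range.1 hj).le]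
  · rw [sum_congr rfl fun j hj => by rw [min_eq_left (mem_Ico.1 hj).1], sum_const, Nat.card_Ico,
      nsmul_eq_mul]

theorem sum_range_sum_range_pow_min {K : Type*} [Field K] {x : K} (hx : x ≠ 1) {a b : ℕ}
    (hab : a ≤ b) :
    ∑ i ∈ range (a + 1), ∑ j ∈ range (b + 1), x ^ min i j =
      (((b : K) - a + 1) * x ^ (a + 2) - ((b : K) - a - 1) * x ^ (a + 1) -
        ((a : K) + b + 3) * x + ((a : K) + b + 1)) / (x - 1) ^ 2 := by
  have hx' : x - 1 ≠ 0 := sub_ne_zero.2 hx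
  induction a with
  | zero =>
    simp only [zero_add, range_one, sum_singleton, Nat.zero_min, pow_zero, sum_const, card_range,
      nsmul_eq_mul, mul_one, Nat.cast_zero]
    field_simp
    push_cast
    ring
  | succ a ih =>
    rw [sum_range_succ, ih (by omega), sum_range_pow_min_of_le x hab, geom_sum_eq hx,
      Nat.cast_sub (by omega)]
    field_simp
    push_cast
    ring

theorem card_subgroups_rank_two_p_group_general (p α₁ α₂ : ℕ) (hp : p.Prime)
    (h12 : α₁ ≤ α₂) :
    (Nat.card (AddSubgroup (ZMod (p ^ α₁) × ZMod (p ^ α₂))) : ℚ) =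
      (((α₂ : ℚ) - α₁ + 1) * (p : ℚ) ^ (α₁ + 2) -
        ((α₂ : ℚ) - α₁ - 1) * (p : ℚ) ^ (α₁ + 1) -
        ((α₁ : ℚ) + α₂ + 3) * (p : ℚ) + ((α₁ : ℚ) + α₂ + 1)) / ((p : ℚ) - 1) ^ 2 := by
  have := Fact.mk hp
  rw [card_addSubgroup_prod_of_isAddCyclic, Nat.card_zmod, Nat.card_zmod]
  simp_rw [Nat.sum_divisors_prime_pow hp, Nat.gcd_pow_pow_eq_pow_min_s14]
  push_cast
  exact sum_range_sum_range_pow_min (by exact_mod_cast hp.one_lt.ne') h12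

theorem card_subgroups_rank_two_p_group (p α₁ α₂ : ℕ) (hp : p.Prime)
    (h1 : 1 ≤ α₁) (h12 : α₁ ≤ α₂) :
    (Nat.card (AddSubgroup (ZMod (p ^ α₁) × ZMod (p ^ α₂))) : ℚ) =
      (((α₂ : ℚ) - α₁ + 1) * (p : ℚ) ^ (α₁ + 2) -
        ((α₂ : ℚ) - α₁ - 1) * (p : ℚ) ^ (α₁ + 1) -
        ((α₁ : ℚ) + α₂ + 3) * (p : ℚ) + ((α₁ : ℚ) + α₂ + 1)) / ((p : ℚ) - 1) ^ 2 :=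
  card_subgroups_rank_two_p_group_general p α₁ α₂ hp h12
end

section
/- For n ≥ 0, the number of cyclic subgroups of Q_8 × (Z_2)^n equals 5·2^n; in particular Q_8 × (Z_2)^n has exactly 3·2^n cyclic subgroups of order 4. -/
/-!
A cyclic subgroup of order `d` has `φ d` generators, so the elements of order `d` are `φ d` times
as many as the cyclic subgroups of order `d`. In `Q₈ × (ℤ₂)ⁿ` every element satisfies `x⁴ = 1`, and
since `-1` is the only involution of `Q₈`, exactly `2 · 2ⁿ` elements satisfy `x² = 1`: they give
`2 · 2ⁿ` cyclic subgroups of order at most `2`, while the remaining `6 · 2ⁿ` elements have order `4`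
and give `3 · 2ⁿ` cyclic subgroups of order `4`.
-/

open Finset

section CyclicSubgroups

variable {G : Type*} [Group G]

theorem card_generators_eq_totient_s16 [Finite G] (H : Subgroup G) [IsCyclic H] :
    Nat.card {x : G // Subgroup.zpowers x = H} = (Nat.card H).totient := by
  have : Fintype H := Fintype.ofFinite H
  let e : {x : G // Subgroup.zpowers x = H} ≃ {y : H // orderOf y = Nat.card H} :=
    { toFun x := ⟨⟨x, x.2.le (Subgroup.mem_zpowers x.1)⟩, by
        rw [Subgroup.orderOf_mk, ← Nat.card_zpowers, x.2]⟩
      invFun y := ⟨y, Subgroup.eq_of_le_of_card_ge (Subgroup.zpowers_le.mpr y.1.2) (by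
        rw [Nat.card_zpowers, Subgroup.orderOf_coe, y.2])⟩
      left_inv _ := rfl
      right_inv _ := rfl }
  classical
  rw [Nat.card_congr e, Nat.card_eq_fintype_card, Fintype.card_subtype,
    IsCyclic.card_orderOf_eq_totient (Nat.card_eq_fintype_card (α := H) ▸ dvd_rfl)]

theorem card_cyclic_subgroups_eq_sum_divisors [Finite G] {m : ℕ} (hm : m ≠ 0)
    (h : ∀ x : G, x ^ m = 1) :
    Nat.card {H : Subgroup G // IsCyclic H} =
      ∑ d ∈ m.divisors, Nat.card {H : Subgroup G // IsCyclic H ∧ Nat.card H = d} := by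
  cases nonempty_fintype G
  classical
  rw [Nat.subtype_card _ fun _ => mem_filter_univ _,
    card_eq_sum_card_fiberwise (f := fun H : Subgroup G => Nat.card H) (t := m.divisors)]
  · refine sum_congr rfl fun d _ => (Nat.subtype_card _ fun H => ?_).symm
    simp
  intro H hH
  obtain ⟨g, rfl⟩ := (Subgroup.isCyclic_iff_exists_zpowers_eq_top _).mp (mem_filter.mp hH).2
  simp only [mem_coe, Nat.mem_divisors, Nat.card_zpowers]
  exact ⟨orderOf_dvd_of_pow_eq_one (h g), hm⟩

variable [Fintype G]

theorem card_orderOf_eq_card_cyclic_subgroups_mul_totient (d : ℕ) :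
    #{x : G | orderOf x = d} =
      Nat.card {H : Subgroup G // IsCyclic H ∧ Nat.card H = d} * d.totient := by
  classical
  rw [Nat.subtype_card _ fun _ => mem_filter_univ _, card_eq_sum_card_fiberwise
    (f := Subgroup.zpowers) (t := {H : Subgroup G | IsCyclic H ∧ Nat.card H = d})
    fun x hx => ?_, ← smul_eq_mul, ← sum_const]
  swap
  · simp only [mem_coe, mem_filter_univ] at hx ⊢
    exact ⟨inferInstance, by rw [Nat.card_zpowers, hx]⟩
  refine sum_congr rfl fun H hH => ?_
  obtain ⟨_, hcard⟩ := (mem_filter.mp hH).2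
  rw [filter_filter, ← hcard, ← card_generators_eq_totient_s16 H]
  refine (Nat.subtype_card _ fun x => ?_).symm
  simp only [mem_filter_univ, and_iff_right_iff_imp]
  intro hx
  rw [← Nat.card_zpowers, hx]

variable [DecidableEq G]

theorem card_pow_two_eq_one_eq_add_card_cyclic_subgroups :
    #{x : G | x ^ 2 = 1} = Nat.card {H : Subgroup G // IsCyclic H ∧ Nat.card H = 1} +
      Nat.card {H : Subgroup G // IsCyclic H ∧ Nat.card H = 2} := by
  rw [← sum_card_orderOf_eq_card_pow_eq_one two_ne_zero, Nat.prime_two.divisors]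
  simp [card_orderOf_eq_card_cyclic_subgroups_mul_totient]

theorem card_cyclic_subgroups_of_pow_four_eq_one (h : ∀ x : G, x ^ 4 = 1) :
    Nat.card {H : Subgroup G // IsCyclic H} =
      #{x : G | x ^ 2 = 1} + Nat.card {H : Subgroup G // IsCyclic H ∧ Nat.card H = 4} := by
  rw [card_cyclic_subgroups_eq_sum_divisors four_ne_zero h,
    card_pow_two_eq_one_eq_add_card_cyclic_subgroups, show Nat.divisors 4 = {1, 2, 4} by decide,
    sum_insert (by decide), sum_pair (by decide), add_assoc]

theorem two_mul_card_cyclic_subgroups_four_add_card_pow_two_eq_one (h : ∀ x : G, x ^ 4 = 1) :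
    2 * Nat.card {H : Subgroup G // IsCyclic H ∧ Nat.card H = 4} + #{x : G | x ^ 2 = 1} =
      Fintype.card G := by
  have hall : #{x : G | x ^ 4 = 1} = Fintype.card G := by simp [h]
  rw [← hall, ← sum_card_orderOf_eq_card_pow_eq_one four_ne_zero,
    ← sum_card_orderOf_eq_card_pow_eq_one two_ne_zero, Nat.prime_two.divisors,
    show Nat.divisors 4 = {1, 2, 4} by decide, sum_pair (by decide), sum_insert (by decide),
    sum_pair (by decide), card_orderOf_eq_card_cyclic_subgroups_mul_totient 4, show Nat.totient 4 = 2 by decide]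
  ring

end CyclicSubgroups

theorem card_prod_filter_pow_two_eq_one {A B : Type*} [Group A] [Group B] [Fintype A] [Fintype B]
    [DecidableEq A] [DecidableEq B] (hB : ∀ b : B, b ^ 2 = 1) :
    #{x : A × B | x ^ 2 = 1} = #{a : A | a ^ 2 = 1} * Fintype.card B := by
  rw [← card_univ, ← card_product]
  congr 1
  ext x
  simp [Prod.ext_iff, hB]

theorem pi_zmod_two_pow_two_eq_one {ι : Type*} (v : ι → Multiplicative (ZMod 2)) : v ^ 2 = 1 :=
  funext fun i => (by decide : ∀ a : Multiplicative (ZMod 2), a ^ 2 = 1) (v i)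

theorem card_cyclic_subgroups_quaternion_times_elementary (n : ℕ) :
    Nat.card {H : Subgroup (QuaternionGroup 2 × (Fin n → Multiplicative (ZMod 2))) //
        IsCyclic H} = 5 * 2 ^ n ∧
    Nat.card {H : Subgroup (QuaternionGroup 2 × (Fin n → Multiplicative (ZMod 2))) //
        IsCyclic H ∧ Nat.card H = 4} = 3 * 2 ^ n := by
  have h4 : ∀ x : QuaternionGroup 2 × (Fin n → Multiplicative (ZMod 2)), x ^ 4 = 1 := fun x =>
    Prod.ext ((by decide : ∀ q : QuaternionGroup 2, q ^ 4 = 1) x.1)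
      ((pow_mul x.2 2 2).trans (pi_zmod_two_pow_two_eq_one _))
  have hsq : #{x : QuaternionGroup 2 × (Fin n → Multiplicative (ZMod 2)) | x ^ 2 = 1} =
      2 * 2 ^ n := by
    rw [card_prod_filter_pow_two_eq_one pi_zmod_two_pow_two_eq_one,
      (by decide : #{q : QuaternionGroup 2 | q ^ 2 = 1} = 2)]
    simp
  have hcard :
      Fintype.card (QuaternionGroup 2 × (Fin n → Multiplicative (ZMod 2))) = 8 * 2 ^ n := by
    simp [QuaternionGroup.card]
  have hfour := two_mul_card_cyclic_subgroups_four_add_card_pow_two_eq_one h4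
  rw [card_cyclic_subgroups_of_pow_four_eq_one h4]
  omega
end

section
/- For n ≥ 3, the generalized quaternion group Q_{2^n} has exactly 2^{n-2} + n cyclic subgroups and 2^{n-1} + n − 1 subgroups in total; hence cdeg(Q_{2^n}) = (2^{n-2}+n)/(2^{n-1}+n−1), which tends to 1/2 as n → ∞. -/
open ArithmeticFunction
open scoped ArithmeticFunction.sigma

namespace IsAddCyclic

variable {G : Type*} [AddCommGroup G] [IsAddCyclic G] [Finite G]

theorem addSubgroup_eq_ker_nsmul_card (T : AddSubgroup G) :
    T = (nsmulAddMonoidHom (Nat.card T) : G →+ G).ker := by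
  refine AddSubgroup.eq_of_le_of_card_ge (fun t ht => ?_) ?_
  · exact congrArg Subtype.val (card_nsmul_eq_zero' (x := (⟨t, ht⟩ : T)))
  · rw [card_nsmulAddMonoidHom_ker, Nat.gcd_eq_right T.card_addSubgroup_dvd_card]

theorem index_injective : Function.Injective (AddSubgroup.index : AddSubgroup G → ℕ) := by
  intro T T' h
  have hcard : Nat.card T = Nat.card T' :=
    Nat.eq_of_mul_eq_mul_right (Nat.pos_of_ne_zero T.index_ne_zero_of_finite)
      (by rw [T.card_mul_index, h, T'.card_mul_index])
  rw [addSubgroup_eq_ker_nsmul_card T, addSubgroup_eq_ker_nsmul_card T', hcard]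

theorem exists_index_eq {d : ℕ} (hd : d ∣ Nat.card G) : ∃ T : AddSubgroup G, T.index = d :=
  ⟨_, by rw [index_nsmulAddMonoidHom_range, Nat.gcd_eq_right hd]⟩

end IsAddCyclic

namespace ZMod

variable {N : ℕ} [NeZero N]

theorem natCast_mem_iff_index_dvd (T : AddSubgroup (ZMod N)) (k : ℕ) :
    (k : ZMod N) ∈ T ↔ T.index ∣ k := by
  have hN : N = Nat.card T * T.index := by rw [T.card_mul_index, Nat.card_zmod]
  conv_lhs => rw [IsAddCyclic.addSubgroup_eq_ker_nsmul_card T]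
  rw [AddMonoidHom.mem_ker, nsmulAddMonoidHom_apply, nsmul_eq_mul, ← Nat.cast_mul,
    natCast_eq_zero_iff]
  calc N ∣ Nat.card T * k ↔ Nat.card T * T.index ∣ Nat.card T * k := by rw [← hN]
    _ ↔ T.index ∣ k := Nat.mul_dvd_mul_iff_left Nat.card_pos

/-- A subgroup goes to its index. -/
noncomputable def addSubgroupNatCastMemEquiv {k : ℕ} (hk : k ∣ N) :
    {T : AddSubgroup (ZMod N) // (k : ZMod N) ∈ T} ≃ k.divisors :=
  Equiv.ofBijective
    (fun T => ⟨T.1.index, Nat.mem_divisors.2 ⟨(natCast_mem_iff_index_dvd T.1 k).1 T.2,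
      Nat.pos_iff_ne_zero.1 (Nat.pos_of_dvd_of_pos hk (NeZero.pos N))⟩⟩)
    ⟨fun T T' h => Subtype.ext (IsAddCyclic.index_injective (congrArg Subtype.val h)), by
      rintro ⟨d, hd⟩
      have hdk := Nat.dvd_of_mem_divisors hd
      obtain ⟨T, hT⟩ := IsAddCyclic.exists_index_eq (G := ZMod N)
        ((Nat.card_zmod N).symm ▸ hdk.trans hk)
      exact ⟨⟨T, (natCast_mem_iff_index_dvd T k).2 (hT ▸ hdk)⟩, Subtype.ext hT⟩⟩

theorem card_addSubgroup : Nat.card (AddSubgroup (ZMod N)) = σ 0 N := by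
  have e := (Equiv.subtypeUnivEquiv fun T : AddSubgroup (ZMod N) => by
    simp only [natCast_self, zero_mem]).symm.trans (addSubgroupNatCastMemEquiv dvd_rfl)
  rw [Nat.card_congr e, Nat.card_eq_fintype_card, Fintype.card_coe, sigma_zero_apply]

theorem card_sigma_quotient_natCast_mem {k : ℕ} (hk : k ∣ N) :
    Nat.card (Σ T : {T : AddSubgroup (ZMod N) // (k : ZMod N) ∈ T}, ZMod N ⧸ T.1) =
      σ 1 k := by
  let e := addSubgroupNatCastMemEquiv hk
  have : Fintype {T : AddSubgroup (ZMod N) // (k : ZMod N) ∈ T} := Fintype.ofEquiv _ e.symm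
  rw [Nat.card_sigma, sigma_one_apply, ← Finset.sum_coe_sort k.divisors]
  exact Fintype.sum_equiv e (fun T => Nat.card (ZMod N ⧸ T.1)) (fun d => d.1)
    fun T => (AddSubgroup.index_eq_card T.1).symm

theorem eq_zero_or_eq_of_mem_of_index_eq {n : ℕ} [NeZero n]
    {T : AddSubgroup (ZMod (2 * n))} (hT : T.index = n) {i : ZMod (2 * n)} (hi : i ∈ T) :
    i = 0 ∨ i = n := by
  rw [← natCast_zmod_val i, natCast_mem_iff_index_dvd, hT] at hi
  obtain ⟨k, hk⟩ := hi
  have hk2 : k < 2 := by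
    have := val_lt i
    rw [hk, mul_comm 2] at this
    exact Nat.lt_of_mul_lt_mul_left this
  rw [← natCast_zmod_val i, hk]
  interval_cases k <;> simp

end ZMod

namespace QuaternionGroup

variable {n : ℕ}

def aSubgroup (T : AddSubgroup (ZMod (2 * n))) : Subgroup (QuaternionGroup n) where
  carrier := {g | match g with
    | a i => i ∈ T
    | xa _ => False}
  one_mem' := T.zero_mem
  mul_mem' := by
    rintro (i | i) (j | j) hi hj
    exacts [T.add_mem hi hj, hj.elim, hi.elim, hi.elim]
  inv_mem' := by
    rintro (i | i) hi
    exacts [T.neg_mem hi, hi.elim]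

theorem xa_notMem_aSubgroup {T : AddSubgroup (ZMod (2 * n))} {i : ZMod (2 * n)} :
    xa i ∉ aSubgroup T :=
  id

def xaSubgroup (T : AddSubgroup (ZMod (2 * n))) (hT : (n : ZMod (2 * n)) ∈ T)
    (c : ZMod (2 * n) ⧸ T) : Subgroup (QuaternionGroup n) where
  carrier := {g | match g with
    | a i => i ∈ T
    | xa i => (i : ZMod (2 * n) ⧸ T) = c}
  one_mem' := T.zero_mem
  mul_mem' := by
    rintro (i | i) (j | j) hi hj
    · exact T.add_mem hi hj
    · change ((j - i : ZMod (2 * n)) : ZMod (2 * n) ⧸ T) = c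
      rwa [QuotientAddGroup.mk_sub, (QuotientAddGroup.eq_zero_iff i).2 hi, sub_zero]
    · change ((i + j : ZMod (2 * n)) : ZMod (2 * n) ⧸ T) = c
      rwa [QuotientAddGroup.mk_add, (QuotientAddGroup.eq_zero_iff j).2 hj, add_zero]
    · change (n : ZMod (2 * n)) + j - i ∈ T
      rw [add_sub_assoc]
      exact T.add_mem hT (QuotientAddGroup.eq_iff_sub_mem.1 (hj.trans hi.symm))
  inv_mem' := by
    rintro (i | i) hi
    · exact T.neg_mem hi
    · change ((n + i : ZMod (2 * n)) : ZMod (2 * n) ⧸ T) = c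
      rwa [QuotientAddGroup.mk_add, (QuotientAddGroup.eq_zero_iff _).2 hT, zero_add]

theorem xa_mem_xaSubgroup {T : AddSubgroup (ZMod (2 * n))} {hT : (n : ZMod (2 * n)) ∈ T}
    {i : ZMod (2 * n)} : xa i ∈ xaSubgroup T hT i :=
  rfl

def aIndices (H : Subgroup (QuaternionGroup n)) : AddSubgroup (ZMod (2 * n)) where
  carrier := {i | a i ∈ H}
  zero_mem' := H.one_mem
  add_mem' := H.mul_mem
  neg_mem' := H.inv_mem

@[simp]
theorem mem_aIndices {H : Subgroup (QuaternionGroup n)} {i : ZMod (2 * n)} :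
    i ∈ aIndices H ↔ a i ∈ H :=
  Iff.rfl

theorem natCast_mem_aIndices {H : Subgroup (QuaternionGroup n)} {j : ZMod (2 * n)}
    (h : xa j ∈ H) : (n : ZMod (2 * n)) ∈ aIndices H := by
  rw [mem_aIndices, ← xa_sq j]
  exact H.pow_mem h 2

theorem eq_aSubgroup_aIndices {H : Subgroup (QuaternionGroup n)} (h : ∀ j, xa j ∉ H) :
    H = aSubgroup (aIndices H) := by
  ext (i | j)
  · rfl
  · exact iff_of_false (h j) xa_notMem_aSubgroup

theorem eq_xaSubgroup_aIndices {H : Subgroup (QuaternionGroup n)} {j : ZMod (2 * n)}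
    (h : xa j ∈ H) : H = xaSubgroup (aIndices H) (natCast_mem_aIndices h) j := by
  ext (i | k)
  · rfl
  · change xa k ∈ H ↔ ((k : ZMod (2 * n)) : ZMod (2 * n) ⧸ aIndices H) = j
    rw [QuotientAddGroup.eq_iff_sub_mem, mem_aIndices, ← H.mul_mem_cancel_left h (y := a (k - j)),
      xa_mul_a, add_sub_cancel]

abbrev SubgroupData (n : ℕ) : Type :=
  AddSubgroup (ZMod (2 * n)) ⊕
    Σ T : {T : AddSubgroup (ZMod (2 * n)) // (n : ZMod (2 * n)) ∈ T}, ZMod (2 * n) ⧸ T.1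

def subgroupOfData : SubgroupData n → Subgroup (QuaternionGroup n)
  | .inl T => aSubgroup T
  | .inr ⟨T, c⟩ => xaSubgroup T.1 T.2 c

theorem subgroupOfData_injective : Function.Injective (subgroupOfData (n := n)) := by
  rintro (T | ⟨⟨T, hT⟩, c⟩) (T' | ⟨⟨T', hT'⟩, c'⟩) h
  · exact congrArg Sum.inl (congrArg aIndices h)
  · obtain ⟨j, rfl⟩ := QuotientAddGroup.mk_surjective c'
    exact (xa_notMem_aSubgroup
      ((congrArg (xa j ∈ ·) h).mpr (xa_mem_xaSubgroup (hT := hT')))).elim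
  · obtain ⟨j, rfl⟩ := QuotientAddGroup.mk_surjective c
    exact (xa_notMem_aSubgroup
      ((congrArg (xa j ∈ ·) h).mp (xa_mem_xaSubgroup (hT := hT)))).elim
  · obtain rfl : T = T' := congrArg aIndices h
    obtain ⟨j, rfl⟩ := QuotientAddGroup.mk_surjective c
    have hc : xa j ∈ xaSubgroup T hT' c' :=
      (congrArg (xa j ∈ ·) h).mp (xa_mem_xaSubgroup (hT := hT))
    rw [show c' = j from hc.symm]

theorem subgroupOfData_surjective : Function.Surjective (subgroupOfData (n := n)) := by
  intro H
  by_cases h : ∃ j, xa j ∈ H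
  · obtain ⟨j, hj⟩ := h
    exact ⟨.inr ⟨⟨_, natCast_mem_aIndices hj⟩, j⟩, (eq_xaSubgroup_aIndices hj).symm⟩
  · exact ⟨.inl _, (eq_aSubgroup_aIndices (not_exists.1 h)).symm⟩

noncomputable def subgroupEquiv : SubgroupData n ≃ Subgroup (QuaternionGroup n) :=
  Equiv.ofBijective _ ⟨subgroupOfData_injective, subgroupOfData_surjective⟩

theorem isCyclic_aSubgroup (T : AddSubgroup (ZMod (2 * n))) : IsCyclic (aSubgroup T) :=
  isCyclic_of_surjective
    (MonoidHom.mk' (fun t : Multiplicative T => (⟨a t.toAdd, t.toAdd.2⟩ : aSubgroup T))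
      fun _ _ => rfl)
    (by
      rintro ⟨i | i, hi⟩
      · exact ⟨.ofAdd ⟨i, hi⟩, rfl⟩
      · exact hi.elim)

theorem isCyclic_xaSubgroup_iff [NeZero n] {T : AddSubgroup (ZMod (2 * n))}
    (hT : (n : ZMod (2 * n)) ∈ T) (c : ZMod (2 * n) ⧸ T) :
    IsCyclic (xaSubgroup T hT c) ↔ T.index = n := by
  obtain ⟨j, rfl⟩ := QuotientAddGroup.mk_surjective c
  constructor
  · intro hcyc
    let := IsCyclic.commGroup (α := xaSubgroup T hT j)
    have hidx : (T.index : ZMod (2 * n)) ∈ T := (ZMod.natCast_mem_iff_index_dvd T _).2 dvd_rfl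
    have hcomm := congrArg Subtype.val
      (mul_comm (⟨xa j, xa_mem_xaSubgroup⟩ : xaSubgroup T hT j) ⟨a _, hidx⟩)
    simp only [Subgroup.coe_mul, xa_mul_a, a_mul_xa, xa.injEq] at hcomm
    have h2 : ((2 * T.index : ℕ) : ZMod (2 * n)) = 0 := by
      push_cast
      linear_combination hcomm
    rw [ZMod.natCast_eq_zero_iff, Nat.mul_dvd_mul_iff_left two_pos] at h2
    exact Nat.dvd_antisymm ((ZMod.natCast_mem_iff_index_dvd T n).1 hT) h2
  · intro hidx
    refine Subgroup.isCyclic_of_le (H' := Subgroup.zpowers (xa j)) ?_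
    rintro (i | i) hi
    · rcases ZMod.eq_zero_or_eq_of_mem_of_index_eq hidx hi with rfl | rfl
      · exact Subgroup.one_mem _
      · exact xa_sq j ▸ Subgroup.pow_mem _ (Subgroup.mem_zpowers _) 2
    · rcases ZMod.eq_zero_or_eq_of_mem_of_index_eq hidx (QuotientAddGroup.eq_iff_sub_mem.1 hi)
        with h | h
      · rw [sub_eq_zero.1 h]
        exact Subgroup.mem_zpowers _
      · have h3 : xa j ^ 3 = xa i := by
          have h2n : ((2 * n : ℕ) : ZMod (2 * n)) = 0 := ZMod.natCast_self _
          push_cast at h2n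
          rw [pow_succ, xa_sq, a_mul_xa, xa.injEq]
          linear_combination -h - h2n
        exact h3 ▸ Subgroup.pow_mem _ (Subgroup.mem_zpowers _) 3

theorem card_subgroup [NeZero n] :
    Nat.card (Subgroup (QuaternionGroup n)) = σ 0 (2 * n) + σ 1 n := by
  rw [← Nat.card_congr subgroupEquiv, Nat.card_sum, ZMod.card_addSubgroup,
    ZMod.card_sigma_quotient_natCast_mem (dvd_mul_left n 2)]

theorem card_isCyclic_subgroup [NeZero n] :
    Nat.card {H : Subgroup (QuaternionGroup n) // IsCyclic H} = σ 0 (2 * n) + n := by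
  let T₂ : {T : AddSubgroup (ZMod (2 * n)) // (n : ZMod (2 * n)) ∈ T} :=
    ⟨(nsmulAddMonoidHom n).range, 1, by simp⟩
  have hT₂ : T₂.1.index = n := by
    rw [IsAddCyclic.index_nsmulAddMonoidHom_range, Nat.card_zmod, Nat.gcd_mul_left_left]
  have hcyclic (s : Σ T : {T : AddSubgroup (ZMod (2 * n)) // (n : ZMod (2 * n)) ∈ T},
      ZMod (2 * n) ⧸ T.1) : IsCyclic (subgroupOfData (.inr s)) ↔ s.1 = T₂ :=
    (isCyclic_xaSubgroup_iff s.1.2 s.2).trans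
      ⟨fun h => Subtype.ext (IsAddCyclic.index_injective (h.trans hT₂.symm)),
        fun h => h ▸ hT₂⟩
  have e : {H : Subgroup (QuaternionGroup n) // IsCyclic H} ≃
      AddSubgroup (ZMod (2 * n)) ⊕ (ZMod (2 * n) ⧸ T₂.1) :=
    (subgroupEquiv.subtypeEquiv fun _ => Iff.rfl).symm.trans <|
      Equiv.subtypeSum.trans <| Equiv.sumCongr (Equiv.subtypeUnivEquiv isCyclic_aSubgroup) <|
        (Equiv.subtypeEquivRight hcyclic).trans (Equiv.sigmaSubtype T₂)
  rw [Nat.card_congr e, Nat.card_sum, ZMod.card_addSubgroup, ← AddSubgroup.index_eq_card, hT₂]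

theorem card_subgroup_two_pow {n : ℕ} (hn : 2 ≤ n) :
    Nat.card (Subgroup (QuaternionGroup (2 ^ (n - 2)))) = 2 ^ (n - 1) + n - 1 := by
  obtain ⟨k, rfl⟩ : ∃ k, n = k + 2 := ⟨n - 2, by omega⟩
  rw [card_subgroup, ← pow_succ', sigma_zero_apply_prime_pow Nat.prime_two,
    sigma_one_apply_prime_pow Nat.prime_two, Nat.geomSum_eq le_rfl]
  have := Nat.one_le_two_pow (n := k + 1)
  simp only [Nat.add_sub_cancel, Nat.add_one_sub_one, Nat.div_one]
  omega

theorem card_isCyclic_subgroup_two_pow {n : ℕ} (hn : 2 ≤ n) :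
    Nat.card {H : Subgroup (QuaternionGroup (2 ^ (n - 2))) // IsCyclic H} = 2 ^ (n - 2) + n := by
  obtain ⟨k, rfl⟩ : ∃ k, n = k + 2 := ⟨n - 2, by omega⟩
  rw [card_isCyclic_subgroup, ← pow_succ', sigma_zero_apply_prime_pow Nat.prime_two]
  simp only [Nat.add_sub_cancel]
  omega

end QuaternionGroup

open Filter Topology in
theorem tendsto_two_pow_add_div_two_pow_add :
    Tendsto (fun n : ℕ => ((2 ^ (n - 2) + n : ℕ) : ℝ) / ((2 ^ (n - 1) + n - 1 : ℕ) : ℝ))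
      atTop (𝓝 (1 / 2)) := by
  rw [← tendsto_add_atTop_iff_nat 2]
  have hm : Tendsto (fun m : ℕ => (m : ℝ) / 2 ^ m) atTop (𝓝 0) := by
    simpa using tendsto_pow_const_div_const_pow_of_one_lt 1 one_lt_two
  have hinv : Tendsto (fun m : ℕ => 1 / (2 : ℝ) ^ m) atTop (𝓝 0) := by
    simpa using tendsto_pow_atTop_nhds_zero_of_lt_one (r := (1 / 2 : ℝ)) (by norm_num)
      (by norm_num)
  have h := (tendsto_const_nhds (x := (1 : ℝ))).add (hm.add (hinv.const_mul 2)) |>.div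
    ((tendsto_const_nhds (x := (2 : ℝ))).add (hm.add hinv)) (by norm_num)
  rw [show ((1 : ℝ) + (0 + 2 * 0)) / (2 + (0 + 0)) = 1 / 2 by norm_num] at h
  refine h.congr fun m => ?_
  rw [Pi.div_apply, show m + 2 - 2 = m by omega, show m + 2 - 1 = m + 1 by omega,
    Nat.add_sub_assoc (by omega : 1 ≤ m + 2)]
  field_simp
  push_cast
  ring

theorem cdeg_generalized_quaternion :
    (∀ n : ℕ, 3 ≤ n →
      Nat.card {H : Subgroup (QuaternionGroup (2 ^ (n - 2))) // IsCyclic H} =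
        2 ^ (n - 2) + n ∧
      Nat.card (Subgroup (QuaternionGroup (2 ^ (n - 2)))) = 2 ^ (n - 1) + n - 1 ∧
      cdeg (QuaternionGroup (2 ^ (n - 2))) =
        ((2 ^ (n - 2) + n : ℕ) : ℚ) / ((2 ^ (n - 1) + n - 1 : ℕ) : ℚ)) ∧
    Filter.Tendsto (fun n : ℕ => cdeg (QuaternionGroup (2 ^ (n - 2))))
      Filter.atTop (nhds (1 / 2)) := by
  have hcdeg (n : ℕ) (hn : 2 ≤ n) : cdeg (QuaternionGroup (2 ^ (n - 2))) =
      ((2 ^ (n - 2) + n : ℕ) : ℚ) / ((2 ^ (n - 1) + n - 1 : ℕ) : ℚ) := by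
    rw [cdeg, QuaternionGroup.card_isCyclic_subgroup_two_pow hn,
      QuaternionGroup.card_subgroup_two_pow hn]
  refine ⟨fun n hn => ⟨QuaternionGroup.card_isCyclic_subgroup_two_pow (by omega),
    QuaternionGroup.card_subgroup_two_pow (by omega), hcdeg n (by omega)⟩, ?_⟩
  rw [Filter.tendsto_congr' (Filter.eventually_atTop.2 ⟨2, hcdeg⟩),
    Rat.isEmbedding_coe_real.tendsto_nhds_iff]
  convert tendsto_two_pow_add_div_two_pow_add using 2 with n
  · simp
  · norm_num
end

section
/- For every positive integer m, the dihedral group D_{2m} of order 2m has exactly m + τ(m) cyclic subgroups and τ(m) + σ(m) subgroups in total, so cdeg(D_{2m}) = (m + τ(m))/(τ(m) + σ(m)), where τ(m) and σ(m) are the number and the sum of the positive divisors of m. -/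
/-!
A subgroup `H` of `D_{2m}` is determined by its rotation part `D ≤ ℤ/m` together with the set of
`j` such that `sr j ∈ H`, which is either empty or a single coset of `D`. Subgroups of the cyclic
group `ℤ/m` are classified by their orders, the divisors `d ∣ m`, and the one of order `d` has
`m / d` cosets; summing `1 + m / d` over `d ∣ m` gives `τ(m) + σ(m)`. A cyclic subgroup is
generated either by a rotation, giving the `τ(m)` rotation subgroups, or by a reflection `sr j`,
giving the `m` subgroups `{1, sr j}`.
-/

namespace IsCyclic

variable {G : Type*} [CommGroup G] [IsCyclic G] [Finite G]

@[to_additive]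
theorem eq_ker_powMonoidHom_card (H : Subgroup G) :
    H = (powMonoidHom (Nat.card H) : G →* G).ker := by
  refine Subgroup.eq_of_le_of_card_ge (fun x hx => ?_) ?_
  · rw [MonoidHom.mem_ker, powMonoidHom_apply]
    exact congrArg Subtype.val (pow_card_eq_one' (G := H) (x := ⟨x, hx⟩))
  · rw [card_powMonoidHom_ker, Nat.gcd_eq_right H.card_subgroup_dvd_card]

@[to_additive]
noncomputable def subgroupEquivDivisors : Subgroup G ≃ (Nat.card G).divisors where
  toFun H := ⟨Nat.card H, Nat.mem_divisors.2 ⟨H.card_subgroup_dvd_card, Nat.card_pos.ne'⟩⟩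
  invFun d := (powMonoidHom d : G →* G).ker
  left_inv H := (eq_ker_powMonoidHom_card H).symm
  right_inv d := Subtype.ext <| by
    dsimp only
    rw [card_powMonoidHom_ker, Nat.gcd_eq_right (Nat.mem_divisors.1 d.2).1]

@[to_additive]
theorem sum_card_subgroup {M : Type*} [AddCommMonoid M] [Fintype (Subgroup G)] (f : ℕ → M) :
    ∑ H : Subgroup G, f (Nat.card H) = ∑ d ∈ (Nat.card G).divisors, f d := by
  rw [← Finset.sum_coe_sort (Nat.card G).divisors]
  exact Fintype.sum_equiv (subgroupEquivDivisors (G := G)) _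
    (fun d : (Nat.card G).divisors => f d) fun _ => rfl

@[to_additive]
theorem card_subgroup : Nat.card (Subgroup G) = (Nat.card G).divisors.card := by
  rw [Nat.card_congr subgroupEquivDivisors, Nat.card_eq_finsetCard]

end IsCyclic

namespace DihedralGroup

variable {n : ℕ}

open Subgroup QuotientAddGroup

/-- `o = none` means no reflections; `o = some q` means the reflections `sr j` with `j ∈ q`. -/
def mkSubgroup (D : AddSubgroup (ZMod n)) (o : Option (ZMod n ⧸ D)) :
    Subgroup (DihedralGroup n) where
  carrier := {x | match x with
    | r i => i ∈ D
    | sr j => o = some (j : ZMod n ⧸ D)}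
  one_mem' := D.zero_mem
  mul_mem' := by
    rintro (a | a) (b | b) ha hb
    · exact D.add_mem ha hb
    · show o = some _
      rw [hb, sub_eq_add_neg, mk_add_of_mem b (D.neg_mem ha)]
    · show o = some _
      rw [ha, mk_add_of_mem a hb]
    · show b - a ∈ D
      exact eq_iff_sub_mem.1 (Option.some_injective _ (hb.symm.trans ha))
  inv_mem' := by
    rintro (a | a) ha
    · exact D.neg_mem ha
    · exact ha

@[simp]
theorem r_mem_mkSubgroup {D : AddSubgroup (ZMod n)} {o : Option (ZMod n ⧸ D)} {i : ZMod n} :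
    r i ∈ mkSubgroup D o ↔ i ∈ D :=
  Iff.rfl

@[simp]
theorem sr_mem_mkSubgroup {D : AddSubgroup (ZMod n)} {o : Option (ZMod n ⧸ D)} {j : ZMod n} :
    sr j ∈ mkSubgroup D o ↔ o = some (j : ZMod n ⧸ D) :=
  Iff.rfl

theorem mkSubgroup_injective :
    Function.Injective fun x : Σ D : AddSubgroup (ZMod n), Option (ZMod n ⧸ D) =>
      mkSubgroup x.1 x.2 := by
  rintro ⟨D, o⟩ ⟨D', o'⟩ h
  obtain rfl : D = D' := AddSubgroup.ext fun i => by
    simpa using SetLike.ext_iff.1 h (r i)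
  congr
  refine Option.ext fun q => ?_
  obtain ⟨j, rfl⟩ := mk_surjective q
  simpa using SetLike.ext_iff.1 h (sr j)

theorem mkSubgroup_surjective :
    Function.Surjective fun x : Σ D : AddSubgroup (ZMod n), Option (ZMod n ⧸ D) =>
      mkSubgroup x.1 x.2 := by
  intro H
  let D : AddSubgroup (ZMod n) :=
    { carrier := {i | r i ∈ H}
      zero_mem' := H.one_mem
      add_mem' := fun ha hb => by simpa using H.mul_mem ha hb
      neg_mem' := fun ha => by simpa using H.inv_mem ha }
  by_cases hs : ∃ j, sr j ∈ H
  · obtain ⟨j₀, hj₀⟩ := hs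
    refine ⟨⟨D, some j₀⟩, SetLike.ext fun x => ?_⟩
    rcases x with i | j
    · rfl
    · rw [sr_mem_mkSubgroup, Option.some_inj, eq_comm, eq_iff_sub_mem, ← H.mul_mem_cancel_left hj₀,
        sr_mul_sr]
      rfl
  · refine ⟨⟨D, none⟩, SetLike.ext fun x => ?_⟩
    rcases x with i | j
    · rfl
    · simpa using fun h => hs ⟨j, h⟩

theorem zpowers_r (i : ZMod n) : zpowers (r i) = mkSubgroup (AddSubgroup.zmultiples i) none := by
  ext (k | k)
  · simp [mem_zpowers_iff, AddSubgroup.mem_zmultiples_iff, r_zpow, mul_comm]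
  · simp [mem_zpowers_iff, r_zpow]

theorem sr_ne_one (j : ZMod n) : sr j ≠ 1 := nofun

theorem mem_zpowers_sr {j : ZMod n} {x : DihedralGroup n} :
    x ∈ zpowers (sr j) ↔ x = 1 ∨ x = sr j := by
  rw [mem_zpowers_iff]
  constructor
  · rintro ⟨k, rfl⟩
    rw [← zpow_mod_orderOf, orderOf_sr]
    rcases Int.emod_two_eq_zero_or_one k with h | h <;> simp [h]
  · rintro (rfl | rfl)
    exacts [⟨0, zpow_zero _⟩, ⟨1, zpow_one _⟩]

def cyclicSubgroup : AddSubgroup (ZMod n) ⊕ ZMod n → Subgroup (DihedralGroup n) :=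
  Sum.elim (mkSubgroup · none) (zpowers ∘ sr)

theorem cyclicSubgroup_injective : Function.Injective (cyclicSubgroup (n := n)) := by
  rintro (D | j) (D' | j') h <;> simp only [cyclicSubgroup, Sum.elim_inl, Sum.elim_inr,
    Function.comp_apply] at h
  · exact congrArg Sum.inl (AddSubgroup.ext fun i => by simpa using SetLike.ext_iff.1 h (r i))
  · simpa using (SetLike.ext_iff.1 h (sr j')).2 (mem_zpowers _)
  · simpa using (SetLike.ext_iff.1 h (sr j)).1 (mem_zpowers _)
  · have := (SetLike.ext_iff.1 h (sr j')).2 (mem_zpowers _)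
    simp [mem_zpowers_sr, sr_ne_one] at this
    rw [this]

theorem range_cyclicSubgroup : Set.range (cyclicSubgroup (n := n)) = Set.range zpowers := by
  ext H
  constructor
  · rintro ⟨D | j, rfl⟩
    · obtain ⟨i, rfl⟩ := (D.isAddCyclic_iff_exists_zmultiples_eq_top).1 inferInstance
      exact ⟨r i, zpowers_r i⟩
    · exact ⟨sr j, rfl⟩
  · rintro ⟨i | j, rfl⟩
    · exact ⟨.inl _, (zpowers_r i).symm⟩
    · exact ⟨.inr j, rfl⟩

theorem card_isCyclic_subgroup [NeZero n] :
    Nat.card {H : Subgroup (DihedralGroup n) // IsCyclic H} = n + n.divisors.card := by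
  have e : AddSubgroup (ZMod n) ⊕ ZMod n ≃ {H : Subgroup (DihedralGroup n) // IsCyclic H} :=
    (Equiv.ofInjective _ cyclicSubgroup_injective).trans <| Equiv.subtypeEquivRight fun H => by
      rw [range_cyclicSubgroup, Set.mem_range, H.isCyclic_iff_exists_zpowers_eq_top]
  rw [← Nat.card_congr e, Nat.card_sum, IsAddCyclic.card_addSubgroup, Nat.card_zmod, add_comm]

theorem card_subgroup [NeZero n] :
    Nat.card (Subgroup (DihedralGroup n)) = n.divisors.card + ∑ d ∈ n.divisors, d := by
  have := Fintype.ofFinite (AddSubgroup (ZMod n))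
  rw [← Nat.card_congr (Equiv.ofBijective _ ⟨mkSubgroup_injective, mkSubgroup_surjective⟩),
    Nat.card_sigma]
  have index_eq (D : AddSubgroup (ZMod n)) : Nat.card (ZMod n ⧸ D) = n / Nat.card D := by
    refine (Nat.div_eq_of_eq_mul_left Nat.card_pos ?_).symm
    rw [← D.index_eq_card, mul_comm, D.card_mul_index, Nat.card_zmod]
  simp_rw [Finite.card_option, index_eq]
  rw [IsAddCyclic.sum_card_addSubgroup (fun d => n / d + 1), Nat.card_zmod, Finset.sum_add_distrib,
    Nat.sum_div_divisors n fun d => d, Finset.card_eq_sum_ones, add_comm]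

end DihedralGroup

theorem cdeg_dihedral (m : ℕ) (hm : 0 < m) :
    Nat.card {H : Subgroup (DihedralGroup m) // IsCyclic H} = m + m.divisors.card ∧
    Nat.card (Subgroup (DihedralGroup m)) = m.divisors.card + ∑ d ∈ m.divisors, d ∧
    cdeg (DihedralGroup m) =
      ((m + m.divisors.card : ℕ) : ℚ) /
        ((m.divisors.card + ∑ d ∈ m.divisors, d : ℕ) : ℚ) := by
  have : NeZero m := ⟨hm.ne'⟩
  refine ⟨DihedralGroup.card_isCyclic_subgroup, DihedralGroup.card_subgroup, ?_⟩
  rw [cdeg, DihedralGroup.card_isCyclic_subgroup, DihedralGroup.card_subgroup]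
end
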